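/- arXiv:2412.01481 — 12 statements merged into one kernel-verified Lean document; each statement's English description precedes it below -/
import Mathlib

section
/- Let κ_u, κ_w > 1, π_u, π_w, μ_u > 0 and α_u, α_w ≥ 0, and let (b_k), (c_k), (d_k) be tracking sequences. Then for every k ≥ 0: α_u b_{k+1} + α_w c_{k+1} ≤ (α_u κ_u^{−k} + α_w ι_k μ_u) b_1 + α_w κ_w^{−k} c_1 + Σ_{j=0}^{k−1} ( α_u κ_u^{−(k−j)} π_u + α_w ( ι_{k−j} μ_u π_u + κ_w^{−(k−j)} π_w ) ) d_{j+1}. -/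
/-- ι_k := Σ_{m=1}^{k} κu^{−m} κw^{−(k+1−m)} (so ι_0 = 0). -/
noncomputable def iota (κu κw : ℝ) (k : ℕ) : ℝ :=
  ∑ m ∈ Finset.Icc 1 k, (κu ^ m)⁻¹ * (κw ^ (k + 1 - m))⁻¹

lemma iota_succ (κu κw : ℝ) (k : ℕ) :
    iota κu κw (k + 1) = κw⁻¹ * (iota κu κw k + (κu ^ (k + 1))⁻¹) := by
  unfold iota
  rw [Finset.sum_Icc_succ_top (by omega), mul_add, Finset.mul_sum]
  congr 1
  · apply Finset.sum_congr rfl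
    intro m hm
    simp only [Finset.mem_Icc] at hm
    have h1 : k + 1 + 1 - m = (k + 1 - m) + 1 := by omega
    rw [h1, pow_succ, mul_inv]
    ring
  · have : k + 1 + 1 - (k + 1) = 1 := by omega
    rw [this, pow_one]
    ring

theorem stmt0 (κu κw πu πw μu αu αw : ℝ)
    (hκu : 1 < κu) (hκw : 1 < κw)
    (hπu : 0 < πu) (hπw : 0 < πw) (hμu : 0 < μu)
    (hαu : 0 ≤ αu) (hαw : 0 ≤ αw)
    (b c d : ℕ → ℝ)
    (hb : ∀ k, 0 ≤ b k) (hc : ∀ k, 0 ≤ c k) (hd : ∀ k, 0 ≤ d k)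
    (hrec1 : ∀ k, 1 ≤ k → κu * b (k + 1) ≤ b k + πu * d k)
    (hrec2 : ∀ k, 1 ≤ k → κw * c (k + 1) ≤ c k + μu * b (k + 1) + πw * d k) :
    ∀ k : ℕ,
      αu * b (k + 1) + αw * c (k + 1) ≤
        (αu * (κu ^ k)⁻¹ + αw * iota κu κw k * μu) * b 1
          + αw * (κw ^ k)⁻¹ * c 1
          + ∑ j ∈ Finset.range k,
              (αu * (κu ^ (k - j))⁻¹ * πu
                + αw * (iota κu κw (k - j) * μu * πu + (κw ^ (k - j))⁻¹ * πw)) * d (j + 1) := by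
  have hκu0 : (0:ℝ) < κu := lt_trans one_pos hκu
  have hκw0 : (0:ℝ) < κw := lt_trans one_pos hκw
  have hB : ∀ k : ℕ, b (k + 1) ≤ (κu ^ k)⁻¹ * b 1
      + ∑ j ∈ Finset.range k, (κu ^ (k - j))⁻¹ * πu * d (j + 1) := by
    intro k
    induction k with
    | zero => simp
    | succ k ih =>
      have h := hrec1 (k + 1) (by omega)
      have h2 : b (k + 2) ≤ κu⁻¹ * (b (k + 1) + πu * d (k + 1)) := by
        calc b (k + 2) ≤ (b (k + 1) + πu * d (k + 1)) / κu := by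
              rw [le_div_iff₀ hκu0]; linarith
          _ = κu⁻¹ * (b (k + 1) + πu * d (k + 1)) := by ring
      calc b (k + 1 + 1) ≤ κu⁻¹ * (b (k + 1) + πu * d (k + 1)) := h2
        _ ≤ κu⁻¹ * (((κu ^ k)⁻¹ * b 1
              + ∑ j ∈ Finset.range k, (κu ^ (k - j))⁻¹ * πu * d (j + 1)) + πu * d (k + 1)) := by
            apply mul_le_mul_of_nonneg_left _ (by positivity)
            linarith
        _ = (κu ^ (k+1))⁻¹ * b 1
              + ∑ j ∈ Finset.range (k+1), (κu ^ (k + 1 - j))⁻¹ * πu * d (j + 1) := by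
            rw [Finset.sum_range_succ]
            have e0 : k + 1 - k = 1 := by omega
            rw [e0, pow_one]
            have hs : ∑ x ∈ Finset.range k, (κu ^ (k + 1 - x))⁻¹ * πu * d (x + 1)
                = κu⁻¹ * ∑ x ∈ Finset.range k, (κu ^ (k - x))⁻¹ * πu * d (x + 1) := by
              rw [Finset.mul_sum]
              apply Finset.sum_congr rfl
              intro j hj
              simp only [Finset.mem_range] at hj
              have : k + 1 - j = (k - j) + 1 := by omega
              rw [this, pow_succ, mul_inv]; ring
            rw [hs, pow_succ, mul_inv]; ring
  have hC : ∀ k : ℕ, c (k + 1) ≤ iota κu κw k * μu * b 1 + (κw ^ k)⁻¹ * c 1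
      + ∑ j ∈ Finset.range k,
          (iota κu κw (k - j) * μu * πu + (κw ^ (k - j))⁻¹ * πw) * d (j + 1) := by
    intro k
    induction k with
    | zero => simp [iota]
    | succ k ih =>
      have h := hrec2 (k + 1) (by omega)
      have h2 : c (k + 2) ≤ κw⁻¹ * (c (k + 1) + μu * b (k + 2) + πw * d (k + 1)) := by
        calc c (k + 2) ≤ (c (k + 1) + μu * b (k + 2) + πw * d (k + 1)) / κw := by
              rw [le_div_iff₀ hκw0]; linarith
          _ = κw⁻¹ * (c (k + 1) + μu * b (k + 2) + πw * d (k + 1)) := by ring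
      have hb2 := hB (k + 1)
      have e0 : k + 1 - k = 1 := by omega
      calc c (k + 1 + 1) ≤ κw⁻¹ * (c (k + 1) + μu * b (k + 2) + πw * d (k + 1)) := h2
        _ ≤ κw⁻¹ * ((iota κu κw k * μu * b 1 + (κw ^ k)⁻¹ * c 1
              + ∑ j ∈ Finset.range k,
                  (iota κu κw (k - j) * μu * πu + (κw ^ (k - j))⁻¹ * πw) * d (j + 1))
              + μu * ((κu ^ (k+1))⁻¹ * b 1
                + ∑ j ∈ Finset.range (k+1), (κu ^ (k + 1 - j))⁻¹ * πu * d (j + 1))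
              + πw * d (k + 1)) := by
            apply mul_le_mul_of_nonneg_left _ (by positivity)
            have := mul_le_mul_of_nonneg_left hb2 (le_of_lt hμu)
            linarith
        _ = iota κu κw (k+1) * μu * b 1 + (κw ^ (k+1))⁻¹ * c 1
              + ∑ j ∈ Finset.range (k+1),
                  (iota κu κw (k + 1 - j) * μu * πu + (κw ^ (k + 1 - j))⁻¹ * πw) * d (j + 1) := by
            have hsB : ∑ j ∈ Finset.range (k+1), (κu ^ (k + 1 - j))⁻¹ * πu * d (j + 1)
                = (∑ j ∈ Finset.range k, (κu ^ (k + 1 - j))⁻¹ * πu * d (j + 1))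
                  + κu⁻¹ * πu * d (k + 1) := by
              rw [Finset.sum_range_succ, e0, pow_one]
            have eiota1 : iota κu κw 1 = κu⁻¹ * κw⁻¹ := by
              simp [iota]
            have hsT : ∑ j ∈ Finset.range (k+1),
                  (iota κu κw (k + 1 - j) * μu * πu + (κw ^ (k + 1 - j))⁻¹ * πw) * d (j + 1)
                = κw⁻¹ * (∑ j ∈ Finset.range k,
                      (iota κu κw (k - j) * μu * πu + (κw ^ (k - j))⁻¹ * πw) * d (j + 1))
                  + κw⁻¹ * μu * (∑ j ∈ Finset.range k, (κu ^ (k + 1 - j))⁻¹ * πu * d (j + 1))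
                  + (iota κu κw 1 * μu * πu + κw⁻¹ * πw) * d (k + 1) := by
              rw [Finset.sum_range_succ, e0, pow_one, Finset.mul_sum, Finset.mul_sum,
                ← Finset.sum_add_distrib]
              congr 1
              apply Finset.sum_congr rfl
              intro j hj
              simp only [Finset.mem_range] at hj
              have h1 : k + 1 - j = (k - j) + 1 := by omega
              rw [h1, iota_succ, pow_succ, mul_inv]
              ring
            rw [hsT, hsB, eiota1, iota_succ,
              show ((κw:ℝ) ^ (k+1))⁻¹ = (κw ^ k)⁻¹ * κw⁻¹ by rw [pow_succ, mul_inv]]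
            ring
  intro k
  have h1 := mul_le_mul_of_nonneg_left (hB k) hαu
  have h2 := mul_le_mul_of_nonneg_left (hC k) hαw
  have hsum : ∑ j ∈ Finset.range k,
        (αu * (κu ^ (k - j))⁻¹ * πu
          + αw * (iota κu κw (k - j) * μu * πu + (κw ^ (k - j))⁻¹ * πw)) * d (j + 1)
      = αu * (∑ j ∈ Finset.range k, (κu ^ (k - j))⁻¹ * πu * d (j + 1))
        + αw * (∑ j ∈ Finset.range k,
            (iota κu κw (k - j) * μu * πu + (κw ^ (k - j))⁻¹ * πw) * d (j + 1)) := by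
    rw [Finset.mul_sum, Finset.mul_sum, ← Finset.sum_add_distrib]
    exact Finset.sum_congr rfl fun j _ => by ring
  rw [hsum]
  linarith
end

section
/- Let κ_u, κ_w > 1, π_u, π_w, μ_u > 0, α_u, α_w ≥ 0, and let (b_k), (c_k), (d_k) be tracking sequences. Then for every p ∈ [1, κ) and every N ≥ 1: Σ_{k=0}^{N−1} p^k ( ẽ_{p,k} − P_p² d_{k+1}² ) ≤ (P_p/π_u) ( α_u κ/(κ−1) + α_w μ_u/(κ−1)² ) b_1² + (P_p/π_w) ( α_w κ/(κ−1) ) c_1². -/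
/-- ψ_j := α_u κ_u^{−j} π_u + α_w (ι_j μ_u π_u + κ_w^{−j} π_w). -/
noncomputable def psi (κu κw πu πw μu αu αw : ℝ) (j : ℕ) : ℝ :=
  αu * (κu ^ j)⁻¹ * πu + αw * (iota κu κw j * μu * πu + (κw ^ j)⁻¹ * πw)

/-- P_p := (κ̄/p) Σ_{j=0}^{∞} p^j ψ_j. -/
noncomputable def Pconst (κu κw πu πw μu αu αw p : ℝ) : ℝ :=
  (max κu κw / p) * ∑' j : ℕ, p ^ j * psi κu κw πu πw μu αu αw j

/-- ẽ_{p,k}. -/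
noncomputable def etilde (κu κw πu πw μu αu αw p : ℝ) (b c d : ℕ → ℝ) (k : ℕ) : ℝ :=
  Pconst κu κw πu πw μu αu αw p * (αu * (κu ^ k)⁻¹ + αw * iota κu κw k * μu) / (πu * p ^ k)
      * b 1 ^ 2
    + Pconst κu κw πu πw μu αu αw p * αw * (κw ^ k)⁻¹ / (πw * p ^ k) * c 1 ^ 2
    + ∑ j ∈ Finset.range k,
        Pconst κu κw πu πw μu αu αw p * psi κu κw πu πw μu αu αw (k - j) / p ^ (k - j)
          * d (j + 1) ^ 2

section Helpers

variable {κu κw πu πw μu αu αw p : ℝ}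

lemma iota_nonneg (hκu : 0 < κu) (hκw : 0 < κw) (k : ℕ) : 0 ≤ iota κu κw k := by
  apply Finset.sum_nonneg
  intro m _
  positivity

lemma iota_le (hκu : 1 < κu) (hκw : 1 < κw) (k : ℕ) :
    iota κu κw k ≤ (k : ℝ) * ((min κu κw) ^ (k + 1))⁻¹ := by
  have hκ : (1:ℝ) < min κu κw := lt_min hκu hκw
  have hκ0 : (0:ℝ) < min κu κw := by linarith
  calc iota κu κw k ≤ ∑ m ∈ Finset.Icc 1 k, ((min κu κw) ^ (k + 1))⁻¹ := by
        apply Finset.sum_le_sum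
        intro m hm
        have hm' := Finset.mem_Icc.mp hm
        have h1 : ((min κu κw) ^ (k+1))⁻¹ = ((min κu κw) ^ m)⁻¹ * ((min κu κw) ^ (k + 1 - m))⁻¹ := by
          rw [← mul_inv, ← pow_add]
          congr 2
          omega
        rw [h1]
        have h2 : ((κu) ^ m)⁻¹ ≤ ((min κu κw) ^ m)⁻¹ := by
          apply inv_anti₀ (by positivity)
          exact pow_le_pow_left₀ (le_of_lt hκ0) (min_le_left _ _) m
        have h3 : ((κw) ^ (k + 1 - m))⁻¹ ≤ ((min κu κw) ^ (k + 1 - m))⁻¹ := by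
          apply inv_anti₀ (by positivity)
          exact pow_le_pow_left₀ (le_of_lt hκ0) (min_le_right _ _) _
        have h4 : (0:ℝ) ≤ (κu ^ m)⁻¹ := by positivity
        have h5 : (0:ℝ) ≤ ((min κu κw) ^ (k + 1 - m))⁻¹ := by positivity
        exact mul_le_mul h2 h3 (by positivity) (by positivity)
    _ = (k : ℝ) * ((min κu κw) ^ (k + 1))⁻¹ := by
        rw [Finset.sum_const, Nat.card_Icc]
        simp

lemma psi_nonneg (hκu : 1 < κu) (hκw : 1 < κw)
    (hπu : 0 < πu) (hπw : 0 < πw) (hμu : 0 < μu) (hαu : 0 ≤ αu) (hαw : 0 ≤ αw) (j : ℕ) :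
    0 ≤ psi κu κw πu πw μu αu αw j := by
  have h1 := iota_nonneg (by linarith : (0:ℝ) < κu) (by linarith : (0:ℝ) < κw) j
  have h2 : (0:ℝ) ≤ (κu ^ j)⁻¹ := by positivity
  have h3 : (0:ℝ) ≤ (κw ^ j)⁻¹ := by positivity
  unfold psi
  have : 0 ≤ iota κu κw j * μu * πu + (κw ^ j)⁻¹ * πw := by positivity
  positivity

lemma psi_le (hκu : 1 < κu) (hκw : 1 < κw)
    (hπu : 0 < πu) (hπw : 0 < πw) (hμu : 0 < μu) (hαu : 0 ≤ αu) (hαw : 0 ≤ αw) (j : ℕ) :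
    psi κu κw πu πw μu αu αw j
      ≤ (αu * πu + αw * (μu * πu + πw)) * ((j:ℝ) + 1) * ((min κu κw) ^ j)⁻¹ := by
  have hκ : (1:ℝ) < min κu κw := lt_min hκu hκw
  have hκ0 : (0:ℝ) < min κu κw := by linarith
  have h2 : ((κu) ^ j)⁻¹ ≤ ((min κu κw) ^ j)⁻¹ := by
    apply inv_anti₀ (by positivity)
    exact pow_le_pow_left₀ (le_of_lt hκ0) (min_le_left _ _) j
  have h3 : ((κw) ^ j)⁻¹ ≤ ((min κu κw) ^ j)⁻¹ := by
    apply inv_anti₀ (by positivity)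
    exact pow_le_pow_left₀ (le_of_lt hκ0) (min_le_right _ _) j
  have h4 : iota κu κw j ≤ (j : ℝ) * ((min κu κw) ^ j)⁻¹ := by
    refine le_trans (iota_le hκu hκw j) ?_
    have : ((min κu κw) ^ (j+1))⁻¹ ≤ ((min κu κw) ^ j)⁻¹ := by
      apply inv_anti₀ (by positivity)
      exact pow_le_pow_right₀ (le_of_lt hκ) (Nat.le_succ j)
    nlinarith [Nat.cast_nonneg (α := ℝ) j, inv_pos.mpr (pow_pos hκ0 (j+1))]
  have hq : (0:ℝ) ≤ ((min κu κw) ^ j)⁻¹ := by positivity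
  have hj : (0:ℝ) ≤ (j:ℝ) := Nat.cast_nonneg j
  unfold psi
  nlinarith [mul_le_mul_of_nonneg_left h2 (mul_nonneg hαu hπu.le),
    mul_le_mul_of_nonneg_left h3 (mul_nonneg hαw hπw.le),
    mul_le_mul_of_nonneg_left h4 (mul_nonneg (mul_nonneg hαw hμu.le) hπu.le),
    mul_nonneg (mul_nonneg (mul_nonneg hαu hπu.le) hj) hq,
    mul_nonneg (mul_nonneg (mul_nonneg hαw hπw.le) hj) hq,
    mul_nonneg (mul_nonneg (mul_nonneg hαw hμu.le) hπu.le) hq]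

lemma summable_ppsi (hκu : 1 < κu) (hκw : 1 < κw)
    (hπu : 0 < πu) (hπw : 0 < πw) (hμu : 0 < μu) (hαu : 0 ≤ αu) (hαw : 0 ≤ αw)
    (hp1 : 1 ≤ p) (hpκ : p < min κu κw) :
    Summable (fun j : ℕ => p ^ j * psi κu κw πu πw μu αu αw j) := by
  have hκ : (1:ℝ) < min κu κw := lt_min hκu hκw
  have hκ0 : (0:ℝ) < min κu κw := by linarith
  set r : ℝ := p / min κu κw with hr
  have hr0 : 0 ≤ r := by positivity
  have hr1 : r < 1 := (div_lt_one hκ0).mpr hpκ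
  have hsum : Summable (fun j : ℕ => (αu * πu + αw * (μu * πu + πw)) * (((j:ℝ) + 1) * r ^ j)) := by
    apply Summable.mul_left
    have h1 : Summable (fun j : ℕ => (j:ℝ) * r ^ j) := by
      have := summable_pow_mul_geometric_of_norm_lt_one (R := ℝ) 1 (r := r)
        (by rwa [Real.norm_eq_abs, abs_of_nonneg hr0])
      simpa using this
    have h2 : Summable (fun j : ℕ => r ^ j) := summable_geometric_of_lt_one hr0 hr1
    simpa [add_mul] using h1.add h2
  apply Summable.of_nonneg_of_le _ _ hsum
  · intro j
    have := psi_nonneg hκu hκw hπu hπw hμu hαu hαw j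
    positivity
  · intro j
    have hb := psi_le hκu hκw hπu hπw hμu hαu hαw j
    have hp0 : (0:ℝ) < p := by linarith
    have hrj : r ^ j = p ^ j * ((min κu κw) ^ j)⁻¹ := by
      rw [hr, div_pow, div_eq_mul_inv]
    calc p ^ j * psi κu κw πu πw μu αu αw j
        ≤ p ^ j * ((αu * πu + αw * (μu * πu + πw)) * ((j:ℝ) + 1) * ((min κu κw) ^ j)⁻¹) := by
          apply mul_le_mul_of_nonneg_left hb (by positivity)
      _ = (αu * πu + αw * (μu * πu + πw)) * (((j:ℝ) + 1) * r ^ j) := by rw [hrj]; ring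

end Helpers

section Geom

lemma geom_inv_sum_le {x : ℝ} (hx : 1 < x) (N : ℕ) :
    ∑ k ∈ Finset.range N, (x ^ k)⁻¹ ≤ x / (x - 1) := by
  have hx0 : (0:ℝ) < x := by linarith
  have hr0 : (0:ℝ) ≤ x⁻¹ := by positivity
  have hr1 : x⁻¹ < 1 := inv_lt_one_of_one_lt₀ hx
  calc ∑ k ∈ Finset.range N, (x ^ k)⁻¹ = ∑ k ∈ Finset.range N, (x⁻¹) ^ k := by
        simp [inv_pow]
    _ ≤ ∑' k : ℕ, (x⁻¹) ^ k :=
        Summable.sum_le_tsum _ (fun k _ => by positivity) (summable_geometric_of_lt_one hr0 hr1)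
    _ = (1 - x⁻¹)⁻¹ := tsum_geometric_of_lt_one hr0 hr1
    _ = x / (x - 1) := by
        rw [show (1 - x⁻¹) = (x - 1) / x by field_simp, inv_div]

lemma iota_sum_le {κu κw : ℝ} (hκu : 1 < κu) (hκw : 1 < κw) (N : ℕ) :
    ∑ k ∈ Finset.range N, iota κu κw k ≤ 1 / (min κu κw - 1) ^ 2 := by
  have hκ : (1:ℝ) < min κu κw := lt_min hκu hκw
  have hκ0 : (0:ℝ) < min κu κw := by linarith
  set m := min κu κw with hm
  have hq0 : (0:ℝ) ≤ m⁻¹ := by positivity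
  have hq1 : m⁻¹ < 1 := inv_lt_one_of_one_lt₀ hκ
  have hsum : Summable (fun k : ℕ => (k:ℝ) * (m⁻¹) ^ k) := by
    have := summable_pow_mul_geometric_of_norm_lt_one (R := ℝ) 1 (r := m⁻¹)
      (by rwa [Real.norm_eq_abs, abs_of_nonneg hq0])
    simpa using this
  calc ∑ k ∈ Finset.range N, iota κu κw k
      ≤ ∑ k ∈ Finset.range N, m⁻¹ * ((k:ℝ) * (m⁻¹) ^ k) := by
        apply Finset.sum_le_sum
        intro k _
        refine le_trans (iota_le hκu hκw k) (le_of_eq ?_)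
        rw [← inv_pow, pow_succ]
        ring
    _ ≤ ∑' k : ℕ, m⁻¹ * ((k:ℝ) * (m⁻¹) ^ k) := by
        apply Summable.sum_le_tsum _ (fun k _ => by positivity) (hsum.mul_left _)
    _ = m⁻¹ * ∑' k : ℕ, (k:ℝ) * (m⁻¹) ^ k := tsum_mul_left
    _ = m⁻¹ * (m⁻¹ / (1 - m⁻¹) ^ 2) := by
        rw [tsum_coe_mul_geometric_of_norm_lt_one
          (by rwa [Real.norm_eq_abs, abs_of_nonneg hq0])]
    _ = 1 / (m - 1) ^ 2 := by
        have h1 : m ≠ 0 := ne_of_gt hκ0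
        have h2 : m - 1 ≠ 0 := sub_ne_zero.mpr (ne_of_gt hκ)
        field_simp

end Geom

theorem stmt2 (κu κw πu πw μu αu αw : ℝ)
    (hκu : 1 < κu) (hκw : 1 < κw)
    (hπu : 0 < πu) (hπw : 0 < πw) (hμu : 0 < μu)
    (hαu : 0 ≤ αu) (hαw : 0 ≤ αw)
    (b c d : ℕ → ℝ)
    (hb : ∀ k, 0 ≤ b k) (hc : ∀ k, 0 ≤ c k) (hd : ∀ k, 0 ≤ d k)
    (hrec1 : ∀ k, 1 ≤ k → κu * b (k + 1) ≤ b k + πu * d k)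
    (hrec2 : ∀ k, 1 ≤ k → κw * c (k + 1) ≤ c k + μu * b (k + 1) + πw * d k)
    (p : ℝ) (hp1 : 1 ≤ p) (hpκ : p < min κu κw) :
    ∀ N : ℕ, 1 ≤ N →
      ∑ k ∈ Finset.range N,
          p ^ k * (etilde κu κw πu πw μu αu αw p b c d k
                    - Pconst κu κw πu πw μu αu αw p ^ 2 * d (k + 1) ^ 2)
        ≤ Pconst κu κw πu πw μu αu αw p / πu
              * (αu * min κu κw / (min κu κw - 1) + αw * μu / (min κu κw - 1) ^ 2) * b 1 ^ 2
          + Pconst κu κw πu πw μu αu αw p / πw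
              * (αw * min κu κw / (min κu κw - 1)) * c 1 ^ 2 := by
  intro N _
  have hκ : (1:ℝ) < min κu κw := lt_min hκu hκw
  have hκ0 : (0:ℝ) < min κu κw := by linarith
  have hp0 : (0:ℝ) < p := by linarith
  set ψ : ℕ → ℝ := psi κu κw πu πw μu αu αw with hψ
  set P : ℝ := Pconst κu κw πu πw μu αu αw p with hP
  have hψ0 : ∀ j, 0 ≤ ψ j := psi_nonneg hκu hκw hπu hπw hμu hαu hαw
  have hsum : Summable (fun j : ℕ => p ^ j * ψ j) :=
    summable_ppsi hκu hκw hπu hπw hμu hαu hαw hp1 hpκ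
  have hS0 : 0 ≤ ∑' j : ℕ, p ^ j * ψ j :=
    tsum_nonneg (fun j => by have := hψ0 j; positivity)
  have hSP : (∑' j : ℕ, p ^ j * ψ j) ≤ P := by
    rw [hP]
    unfold Pconst
    rw [← hψ]
    have h1 : (1:ℝ) ≤ max κu κw / p := by
      rw [le_div_iff₀ hp0]
      have : min κu κw ≤ max κu κw := le_trans (min_le_left _ _) (le_max_left _ _)
      linarith
    exact le_mul_of_one_le_left hS0 h1
  have hP0 : 0 ≤ P := le_trans hS0 hSP
  have hpsisum : ∀ M : ℕ, ∑ i ∈ Finset.range M, ψ (i + 1) ≤ P := by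
    intro M
    have h1 : ∑ i ∈ Finset.range M, ψ (i + 1)
        ≤ ∑ i ∈ Finset.range M, p ^ (i + 1) * ψ (i + 1) := by
      apply Finset.sum_le_sum
      intro i _
      have hpow : (1:ℝ) ≤ p ^ (i + 1) := by
        have := pow_le_pow_left₀ (by norm_num : (0:ℝ) ≤ 1) hp1 (i + 1)
        simpa using this
      exact le_mul_of_one_le_left (hψ0 _) hpow
    have h2 : ∑ i ∈ Finset.range M, p ^ (i + 1) * ψ (i + 1)
        ≤ ∑ j ∈ Finset.range (M + 1), p ^ j * ψ j := by
      rw [Finset.sum_range_succ']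
      have : 0 ≤ p ^ 0 * ψ 0 := by have := hψ0 0; positivity
      linarith
    have h3 : ∑ j ∈ Finset.range (M + 1), p ^ j * ψ j ≤ ∑' j : ℕ, p ^ j * ψ j :=
      Summable.sum_le_tsum _ (fun j _ => by have := hψ0 j; positivity) hsum
    linarith
  have hkey : ∀ k : ℕ, p ^ k * etilde κu κw πu πw μu αu αw p b c d k =
      P * (αu * (κu ^ k)⁻¹ + αw * iota κu κw k * μu) / πu * b 1 ^ 2
      + P * αw * (κw ^ k)⁻¹ / πw * c 1 ^ 2
      + ∑ j ∈ Finset.range k, p ^ j * (P * ψ (k - j)) * d (j + 1) ^ 2 := by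
    intro k
    have hpk : (p:ℝ) ^ k ≠ 0 := by positivity
    unfold etilde
    rw [← hP, ← hψ]
    rw [mul_add, mul_add, Finset.mul_sum]
    congr 1
    · congr 1
      · field_simp
      · field_simp
    · apply Finset.sum_congr rfl
      intro j hj
      have hjk : j < k := Finset.mem_range.mp hj
      have h1 : p ^ k = p ^ (k - j) * p ^ j := by
        rw [← pow_add]
        congr 1
        omega
      have h2 : (p:ℝ) ^ (k - j) ≠ 0 := by positivity
      rw [h1]
      field_simp
  have hsplit : ∑ k ∈ Finset.range N,
        p ^ k * (etilde κu κw πu πw μu αu αw p b c d k - P ^ 2 * d (k + 1) ^ 2)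
      = (∑ k ∈ Finset.range N,
          P * (αu * (κu ^ k)⁻¹ + αw * iota κu κw k * μu) / πu * b 1 ^ 2)
      + (∑ k ∈ Finset.range N, P * αw * (κw ^ k)⁻¹ / πw * c 1 ^ 2)
      + ((∑ k ∈ Finset.range N, ∑ j ∈ Finset.range k, p ^ j * (P * ψ (k - j)) * d (j + 1) ^ 2)
         - ∑ k ∈ Finset.range N, p ^ k * (P ^ 2 * d (k + 1) ^ 2)) := by
    rw [← Finset.sum_add_distrib, ← Finset.sum_sub_distrib, ← Finset.sum_add_distrib]
    apply Finset.sum_congr rfl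
    intro k _
    rw [mul_sub, hkey k]
    ring
  have hD : (∑ k ∈ Finset.range N, ∑ j ∈ Finset.range k, p ^ j * (P * ψ (k - j)) * d (j + 1) ^ 2)
      ≤ ∑ k ∈ Finset.range N, p ^ k * (P ^ 2 * d (k + 1) ^ 2) := by
    have hswap := Finset.sum_Ico_Ico_comm' 0 N
      (fun j k => p ^ j * (P * ψ (k - j)) * d (j + 1) ^ 2)
    simp only [Finset.range_eq_Ico]
    rw [← hswap]
    apply Finset.sum_le_sum
    intro j _
    have harith : ∀ i : ℕ, j + 1 + i - j = i + 1 := fun i => by omega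
    calc ∑ k ∈ Finset.Ico (j + 1) N, p ^ j * (P * ψ (k - j)) * d (j + 1) ^ 2
        = ∑ i ∈ Finset.range (N - (j + 1)), p ^ j * (P * ψ (i + 1)) * d (j + 1) ^ 2 := by
          rw [Finset.sum_Ico_eq_sum_range]
          simp only [harith]
      _ = (p ^ j * P * d (j + 1) ^ 2) * ∑ i ∈ Finset.range (N - (j + 1)), ψ (i + 1) := by
          rw [Finset.mul_sum]
          apply Finset.sum_congr rfl
          intros
          ring
      _ ≤ (p ^ j * P * d (j + 1) ^ 2) * P := by
          apply mul_le_mul_of_nonneg_left (hpsisum _) (by positivity)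
      _ = p ^ j * (P ^ 2 * d (j + 1) ^ 2) := by ring
  have hgmono : ∀ x : ℝ, 1 < x → min κu κw ≤ x → x / (x - 1) ≤ min κu κw / (min κu κw - 1) := by
    intro x hx hmx
    rw [div_le_div_iff₀ (by linarith) (by linarith)]
    nlinarith
  have hg1 : ∑ k ∈ Finset.range N, (κu ^ k)⁻¹ ≤ min κu κw / (min κu κw - 1) :=
    le_trans (geom_inv_sum_le hκu N) (hgmono κu hκu (min_le_left _ _))
  have hg2 : ∑ k ∈ Finset.range N, (κw ^ k)⁻¹ ≤ min κu κw / (min κu κw - 1) :=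
    le_trans (geom_inv_sum_le hκw N) (hgmono κw hκw (min_le_right _ _))
  have hg3 : ∑ k ∈ Finset.range N, iota κu κw k ≤ 1 / (min κu κw - 1) ^ 2 :=
    iota_sum_le hκu hκw N
  have hT1 : ∑ k ∈ Finset.range N,
        P * (αu * (κu ^ k)⁻¹ + αw * iota κu κw k * μu) / πu * b 1 ^ 2
      ≤ P / πu * (αu * min κu κw / (min κu κw - 1) + αw * μu / (min κu κw - 1) ^ 2)
          * b 1 ^ 2 := by
    have heq : ∑ k ∈ Finset.range N,
          P * (αu * (κu ^ k)⁻¹ + αw * iota κu κw k * μu) / πu * b 1 ^ 2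
        = (P / πu * b 1 ^ 2 * αu) * (∑ k ∈ Finset.range N, (κu ^ k)⁻¹)
          + (P / πu * b 1 ^ 2 * (αw * μu)) * (∑ k ∈ Finset.range N, iota κu κw k) := by
      rw [Finset.mul_sum, Finset.mul_sum, ← Finset.sum_add_distrib]
      apply Finset.sum_congr rfl
      intros
      ring
    rw [heq]
    have hc1 : (0:ℝ) ≤ P / πu * b 1 ^ 2 * αu := by positivity
    have hc2 : (0:ℝ) ≤ P / πu * b 1 ^ 2 * (αw * μu) := by positivity
    calc (P / πu * b 1 ^ 2 * αu) * (∑ k ∈ Finset.range N, (κu ^ k)⁻¹)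
          + (P / πu * b 1 ^ 2 * (αw * μu)) * (∑ k ∈ Finset.range N, iota κu κw k)
        ≤ (P / πu * b 1 ^ 2 * αu) * (min κu κw / (min κu κw - 1))
          + (P / πu * b 1 ^ 2 * (αw * μu)) * (1 / (min κu κw - 1) ^ 2) :=
          add_le_add (mul_le_mul_of_nonneg_left hg1 hc1) (mul_le_mul_of_nonneg_left hg3 hc2)
      _ = P / πu * (αu * min κu κw / (min κu κw - 1) + αw * μu / (min κu κw - 1) ^ 2)
            * b 1 ^ 2 := by ring
  have hT2 : ∑ k ∈ Finset.range N, P * αw * (κw ^ k)⁻¹ / πw * c 1 ^ 2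
      ≤ P / πw * (αw * min κu κw / (min κu κw - 1)) * c 1 ^ 2 := by
    have heq : ∑ k ∈ Finset.range N, P * αw * (κw ^ k)⁻¹ / πw * c 1 ^ 2
        = (P / πw * c 1 ^ 2 * αw) * ∑ k ∈ Finset.range N, (κw ^ k)⁻¹ := by
      rw [Finset.mul_sum]
      apply Finset.sum_congr rfl
      intros
      ring
    rw [heq]
    have hc1 : (0:ℝ) ≤ P / πw * c 1 ^ 2 * αw := by positivity
    calc (P / πw * c 1 ^ 2 * αw) * ∑ k ∈ Finset.range N, (κw ^ k)⁻¹
        ≤ (P / πw * c 1 ^ 2 * αw) * (min κu κw / (min κu κw - 1)) :=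
          mul_le_mul_of_nonneg_left hg2 hc1
      _ = P / πw * (αw * min κu κw / (min κu κw - 1)) * c 1 ^ 2 := by ring
  rw [hsplit]
  linarith [hD, hT1, hT2]
end

section
/- Let X be a real normed space, let Λ : X → X* be bounded linear, self-adjoint and positive semi-definite, and let F : X → ℝ be Gâteaux differentiable with Λ-firmly Lipschitz Gâteaux derivative DF. Then for all x, z ∈ X: F(x) − F(z) − ⟨DF(z), x − z⟩ ≤ (1/2) ‖z − x‖_Λ². -/
/-! Along the segment `t ↦ z + t • (x - z)` the slope `g' t = DF (z + t • (x - z)) (x - z)` of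
`g t = F (z + t • (x - z))` grows at most linearly: firm Lipschitz continuity gives
`g' t - g' 0 ≤ t * ‖x - z‖²_Λ`. Hence `g t - t * g' 0 - t² * ‖x - z‖²_Λ / 2` is antitone on `[0, 1]`,
and comparing its values at `0` and `1` is the claim. -/

open Set

def FirmlyLipschitzWith {X : Type*} [NormedAddCommGroup X] [NormedSpace ℝ X]
    (Λ : X →L[ℝ] StrongDual ℝ X) (DF : X → StrongDual ℝ X) : Prop :=
  ∀ x z h : X, (DF z - DF x) h ≤ √(Λ (x - z) (x - z)) * √(Λ h h)

theorem HasLineDerivAt.hasDerivAt_add_smul {𝕜 E F : Type*} [NontriviallyNormedField 𝕜]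
    [AddCommGroup E] [Module 𝕜 E] [NormedAddCommGroup F] [NormedSpace 𝕜 F]
    {f : E → F} {f' : F} {x v : E} {t : 𝕜} (hf : HasLineDerivAt 𝕜 f f' (x + t • v) v) :
    HasDerivAt (fun s : 𝕜 => f (x + s • v)) f' t := by
  have hf : HasDerivAt (fun s : 𝕜 => f (x + t • v + s • v)) f' (t - t) := by
    rw [sub_self]; exact hf
  convert hf.comp_sub_const t t using 1
  funext s
  congr 1
  module

theorem sub_sub_deriv_le_half_of_deriv_sub_le {g g' : ℝ → ℝ} {c : ℝ}
    (hg : ∀ t ∈ Icc (0 : ℝ) 1, HasDerivAt g (g' t) t)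
    (hg' : ∀ t ∈ Icc (0 : ℝ) 1, g' t - g' 0 ≤ c * t) :
    g 1 - g 0 - g' 0 ≤ c / 2 := by
  set φ : ℝ → ℝ := fun t => g t - t * g' 0 - c / 2 * t ^ 2
  have hφ : ∀ t ∈ Icc (0 : ℝ) 1, HasDerivAt φ (g' t - g' 0 - c * t) t := fun t ht =>
    (((hg t ht).sub ((hasDerivAt_id t).mul_const _)).sub
      ((hasDerivAt_pow 2 t).const_mul (c / 2))).congr_deriv (by ring)
  have hanti : AntitoneOn φ (Icc 0 1) :=
    antitoneOn_of_hasDerivWithinAt_nonpos (convex_Icc 0 1)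
      (fun t ht => (hφ t ht).continuousAt.continuousWithinAt)
      (fun t ht => (hφ t (interior_subset ht)).hasDerivWithinAt)
      (fun t ht => by linarith [hg' t (interior_subset ht)])
  have h10 := hanti (left_mem_Icc.2 zero_le_one) (right_mem_Icc.2 zero_le_one) zero_le_one
  simp only [φ] at h10
  linarith

section

variable {X : Type*} [NormedAddCommGroup X] [NormedSpace ℝ X] {Λ : X →L[ℝ] StrongDual ℝ X}

theorem sqrt_apply_smul_smul (a : ℝ) (h : X) :
    √(Λ (a • h) (a • h)) = |a| * √(Λ h h) := by
  simp only [map_smul, smul_apply, smul_eq_mul]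
  rw [← mul_assoc, Real.sqrt_mul (mul_self_nonneg a), Real.sqrt_mul_self_eq_abs]

theorem FirmlyLipschitzWith.apply_add_smul_sub_apply_le (hΛ : ∀ x : X, 0 ≤ Λ x x)
    {DF : X → StrongDual ℝ X} (hDF : FirmlyLipschitzWith Λ DF) (z h : X) {t : ℝ} (ht : 0 ≤ t) :
    DF (z + t • h) h - DF z h ≤ Λ h h * t := by
  have key := hDF z (z + t • h) h
  rwa [show z - (z + t • h) = (-t) • h by module, sqrt_apply_smul_smul, abs_neg, abs_of_nonneg ht,
    mul_assoc, Real.mul_self_sqrt (hΛ h), sub_apply, mul_comm] at key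

end

theorem stmt5_general {X : Type*} [NormedAddCommGroup X] [NormedSpace ℝ X]
    (Λ : X →L[ℝ] StrongDual ℝ X)
    (hΛpsd : ∀ x : X, 0 ≤ Λ x x)
    (F : X → ℝ) (DF : X → StrongDual ℝ X)
    (hGateaux : ∀ x h : X, HasDerivAt (fun t : ℝ => F (x + t • h)) (DF x h) 0)
    (hfirm : ∀ x z h : X,
      (DF z - DF x) h ≤ Real.sqrt (Λ (x - z) (x - z)) * Real.sqrt (Λ h h)) :
    ∀ x z : X,
      F x - F z - DF z (x - z) ≤ (1 / 2) * Real.sqrt (Λ (z - x) (z - x)) ^ 2 := by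
  intro x z
  have hsegment := sub_sub_deriv_le_half_of_deriv_sub_le
    (g := fun t => F (z + t • (x - z))) (g' := fun t => DF (z + t • (x - z)) (x - z))
    (c := Λ (x - z) (x - z))
    (fun t _ => HasLineDerivAt.hasDerivAt_add_smul (hGateaux _ _))
    (fun t ht => by
      simpa only [zero_smul, add_zero] using
        FirmlyLipschitzWith.apply_add_smul_sub_apply_le hΛpsd hfirm z (x - z) ht.1)
  have hnorm : √(Λ (z - x) (z - x)) ^ 2 = Λ (x - z) (x - z) := by
    rw [← neg_sub x z, map_neg, map_neg, neg_apply, neg_neg]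
    exact Real.sq_sqrt (hΛpsd _)
  simp only [zero_smul, add_zero, one_smul, add_sub_cancel] at hsegment
  linarith

theorem stmt5 {X : Type*} [NormedAddCommGroup X] [NormedSpace ℝ X]
    (Λ : X →L[ℝ] StrongDual ℝ X)
    (hΛsa : ∀ x z : X, Λ x z = Λ z x)
    (hΛpsd : ∀ x : X, 0 ≤ Λ x x)
    (F : X → ℝ) (DF : X → StrongDual ℝ X)
    (hGateaux : ∀ x h : X, HasDerivAt (fun t : ℝ => F (x + t • h)) (DF x h) 0)
    (hfirm : ∀ x z h : X,
      (DF z - DF x) h ≤ Real.sqrt (Λ (x - z) (x - z)) * Real.sqrt (Λ h h)) :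
    ∀ x z : X,
      F x - F z - DF z (x - z) ≤ (1 / 2) * Real.sqrt (Λ (z - x) (z - x)) ^ 2 :=
  stmt5_general Λ hΛpsd F DF hGateaux hfirm
end

section
/- Let X be a real normed space, F : X → ℝ Gâteaux differentiable with Λ-firmly Lipschitz derivative DF, where Λ : X → X* is bounded linear, self-adjoint and positive semi-definite. Let x̄ ∈ X, let Ω ∋ x̄, let Γ : X → X* be bounded linear self-adjoint with ⟨DF(z) − DF(x̄), z − x̄⟩ ≥ q_Γ(z − x̄) for all z ∈ Ω, fix ζ > 0, and suppose Γ̃ defined by q_{Γ̃}(x) := q_Γ(x) − (ζ/2)‖x‖_Λ² (i.e. Γ̃ = Γ − (ζ/2)Λ) is Young with witness |Γ̃|. Then for every β > 0, every z ∈ Ω and every x ∈ X: ⟨DF(z) − DF(x̄), x − x̄⟩ ≥ ( q_{Γ̃}(x − x̄) − β ‖x − x̄‖_{|Γ̃|}² ) − ( (1/(2ζ)) ‖x − z‖_Λ² + β^{−1} ‖x − z‖_{|Γ̃|}² − q_{Γ̃}(x − z) ). -/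
/-!
Split `x - x̄ = (z - x̄) + (x - z)`. On `z - x̄` the pairing is bounded below by `q_Γ(z - x̄)`;
on `x - z` the firm Lipschitz bound followed by AM-GM with weight `ζ` costs
`(ζ/2)‖z - x̄‖²_Λ + (1/(2ζ))‖x - z‖²_Λ`, and the first part turns `q_Γ(z - x̄)` into
`q_Γ̃(z - x̄)`. Expanding `q_Γ̃(z - x̄) = q_Γ̃((x - x̄) - (x - z))` leaves two cross terms, each
absorbed by the Young property applied to `(√β a, b / √β)`.
-/

theorem Real.sqrt_mul_sqrt_le_half_mul_add {a b ζ : ℝ} (ha : 0 ≤ a) (hb : 0 ≤ b) (hζ : 0 < ζ) :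
    √a * √b ≤ ζ / 2 * a + 1 / (2 * ζ) * b := by
  have hsq : ζ / 2 * a + 1 / (2 * ζ) * b - √a * √b = (ζ * √a - √b) ^ 2 / (2 * ζ) := by
    field_simp
    rw [sub_sq, mul_pow, Real.sq_sqrt ha, Real.sq_sqrt hb]
    ring
  have : 0 ≤ (ζ * √a - √b) ^ 2 / (2 * ζ) := by positivity
  linarith

section

variable {X : Type*} [NormedAddCommGroup X] [NormedSpace ℝ X]

theorem ContinuousLinearMap.bilin_sub_sub_self (B : X →L[ℝ] StrongDual ℝ X) (u v : X) :
    B (u - v) (u - v) = B u u - (B u v + B v u) + B v v := by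
  simp only [map_sub, sub_apply]
  ring

theorem two_mul_apply_le_weighted_of_young {B P : X →L[ℝ] StrongDual ℝ X}
    (hYoung : ∀ x z : X, 2 * B x z ≤ P x x + P z z) {β : ℝ} (hβ : 0 < β) (x z : X) :
    2 * B x z ≤ β * P x x + β⁻¹ * P z z := by
  have hs : 0 < √β := Real.sqrt_pos.2 hβ
  have h := hYoung (√β • x) ((√β)⁻¹ • z)
  simp only [map_smul, smul_apply, smul_eq_mul] at h
  have hβ' : √β * √β = β := Real.mul_self_sqrt hβ.le
  rwa [inv_mul_cancel_left₀ hs.ne', ← mul_assoc, hβ', ← mul_assoc, ← mul_inv, hβ'] at h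

def IsFirmlyLipschitzWith (Λ : X →L[ℝ] StrongDual ℝ X) (DF : X → StrongDual ℝ X) : Prop :=
  ∀ x z h : X, (DF z - DF x) h ≤ √(Λ (x - z) (x - z)) * √(Λ h h)

theorem IsFirmlyLipschitzWith.neg_le_sub_apply {Λ : X →L[ℝ] StrongDual ℝ X}
    {DF : X → StrongDual ℝ X} (hfirm : IsFirmlyLipschitzWith Λ DF) (hΛpsd : ∀ x : X, 0 ≤ Λ x x)
    {ζ : ℝ} (hζ : 0 < ζ) (x z h : X) :
    -(ζ / 2 * Λ (z - x) (z - x) + 1 / (2 * ζ) * Λ h h) ≤ (DF z - DF x) h := by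
  have hlip := hfirm z x h
  have hamgm := Real.sqrt_mul_sqrt_le_half_mul_add (hΛpsd (z - x)) (hΛpsd h) hζ
  rw [← neg_sub, neg_apply] at hlip
  linarith

end

theorem stmt7_general {X : Type*} [NormedAddCommGroup X] [NormedSpace ℝ X]
    (Λ : X →L[ℝ] StrongDual ℝ X)
    (hΛpsd : ∀ x : X, 0 ≤ Λ x x)
    (DF : X → StrongDual ℝ X)
    (hfirm : ∀ x z h : X,
      (DF z - DF x) h ≤ Real.sqrt (Λ (x - z) (x - z)) * Real.sqrt (Λ h h))
    (xb : X) (Ω : Set X)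
    (Γ : X →L[ℝ] StrongDual ℝ X)
    (hmono : ∀ z ∈ Ω, Γ (z - xb) (z - xb) ≤ (DF z - DF xb) (z - xb))
    (ζ : ℝ) (hζ : 0 < ζ)
    (Γt : X →L[ℝ] StrongDual ℝ X)
    (hΓt : Γt = Γ - (ζ / 2) • Λ)
    (absΓt : X →L[ℝ] StrongDual ℝ X)
    (hYoung : ∀ x z : X, 2 * Γt x z ≤ absΓt x x + absΓt z z) :
    ∀ β : ℝ, 0 < β → ∀ z ∈ Ω, ∀ x : X,
      (DF z - DF xb) (x - xb) ≥
        (Γt (x - xb) (x - xb) - β * absΓt (x - xb) (x - xb))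
          - ((1 / (2 * ζ)) * Λ (x - z) (x - z) + β⁻¹ * absΓt (x - z) (x - z)
              - Γt (x - z) (x - z)) := by
  intro β hβ z hz x
  have hsplit : (DF z - DF xb) (x - xb) = (DF z - DF xb) (z - xb) + (DF z - DF xb) (x - z) := by
    rw [← map_add, sub_add_sub_cancel']
  have hΓt_apply : Γt (z - xb) (z - xb) = Γ (z - xb) (z - xb) - ζ / 2 * Λ (z - xb) (z - xb) := by
    simp only [hΓt, sub_apply, smul_apply, smul_eq_mul]
  have hexpand : Γt (z - xb) (z - xb) = Γt (x - xb) (x - xb)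
      - (Γt (x - xb) (x - z) + Γt (x - z) (x - xb)) + Γt (x - z) (x - z) := by
    rw [← Γt.bilin_sub_sub_self, sub_sub_sub_cancel_left]
  have hlip := IsFirmlyLipschitzWith.neg_le_sub_apply hfirm hΛpsd hζ xb z (x - z)
  have hyoung₁ := two_mul_apply_le_weighted_of_young hYoung hβ (x - xb) (x - z)
  have hyoung₂ := two_mul_apply_le_weighted_of_young hYoung (inv_pos.2 hβ) (x - z) (x - xb)
  rw [inv_inv] at hyoung₂
  linarith [hmono z hz]

theorem stmt7 {X : Type*} [NormedAddCommGroup X] [NormedSpace ℝ X]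
    (Λ : X →L[ℝ] StrongDual ℝ X)
    (hΛsa : ∀ x z : X, Λ x z = Λ z x)
    (hΛpsd : ∀ x : X, 0 ≤ Λ x x)
    (F : X → ℝ) (DF : X → StrongDual ℝ X)
    (hGateaux : ∀ x h : X, HasDerivAt (fun t : ℝ => F (x + t • h)) (DF x h) 0)
    (hfirm : ∀ x z h : X,
      (DF z - DF x) h ≤ Real.sqrt (Λ (x - z) (x - z)) * Real.sqrt (Λ h h))
    (xb : X) (Ω : Set X) (hxbΩ : xb ∈ Ω)
    (Γ : X →L[ℝ] StrongDual ℝ X)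
    (hΓsa : ∀ x z : X, Γ x z = Γ z x)
    (hmono : ∀ z ∈ Ω, Γ (z - xb) (z - xb) ≤ (DF z - DF xb) (z - xb))
    (ζ : ℝ) (hζ : 0 < ζ)
    (Γt : X →L[ℝ] StrongDual ℝ X)
    (hΓt : Γt = Γ - (ζ / 2) • Λ)
    (absΓt : X →L[ℝ] StrongDual ℝ X)
    (habsΓtsa : ∀ x z : X, absΓt x z = absΓt z x)
    (habsΓtpsd : ∀ x : X, 0 ≤ absΓt x x)
    (hYoung : ∀ x z : X, 2 * Γt x z ≤ absΓt x x + absΓt z z) :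
    ∀ β : ℝ, 0 < β → ∀ z ∈ Ω, ∀ x : X,
      (DF z - DF xb) (x - xb) ≥
        (Γt (x - xb) (x - xb) - β * absΓt (x - xb) (x - xb))
          - ((1 / (2 * ζ)) * Λ (x - z) (x - z) + β⁻¹ * absΓt (x - z) (x - z)
              - Γt (x - z) (x - z)) :=
  stmt7_general Λ hΛpsd DF hfirm xb Ω Γ hmono ζ hζ Γt hΓt absΓt hYoung
end

section
/- Let Z, Y be real normed spaces, V a real Hilbert space, K_z : Z → V and K_y : V → Y* bounded linear, and let K_y† : Y → V be the bounded linear map with ⟨K_y v, y⟩_{Y*,Y} = ⟨v, K_y† y⟩_V for all v ∈ V, y ∈ Y. Let M_z : Z → Z* and M_y : Y → Y* be bounded linear, self-adjoint and positive semi-definite, τ, σ > 0, λ ≥ 0, and assume ‖K_y† y‖_V² ≤ ⟨M_y y, y⟩ for all y ∈ Y and τλ⟨M_z z, z⟩ + τσ‖K_z z‖_V² ≤ ⟨M_z z, z⟩ for all z ∈ Z. Define Q(z, y) := τ^{−1}⟨M_z z, z⟩ + σ^{−1}⟨M_y y, y⟩ − 2⟨K_y K_z z, y⟩_{Y*,Y}.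 Then for all (z, y) ∈ Z × Y: (i) Q(z, y) ≥ λ⟨M_z z, z⟩ ≥ 0 (in particular Q is positive semi-definite); and (ii) for any γ_z, γ_y ≥ 0, with γ := min{γ_z τ, γ_y σ}/2, one has γ Q(z, y) ≤ γ_z⟨M_z z, z⟩ + γ_y⟨M_y y, y⟩. -/
/-! By Cauchy–Schwarz in `V` and Young's inequality with weight `σ`, the coupling term satisfies
`2 |⟨K_y K_z z, y⟩| ≤ σ ‖K_z z‖² + σ⁻¹ ‖K_y† y‖²`, and the two step-length conditions bound the
right-hand side by `(τ⁻¹ - λ) ⟨M_z z, z⟩ + σ⁻¹ ⟨M_y y, y⟩`. This gives `λ ⟨M_z z, z⟩ ≤ Q(z, y)`,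
and also `Q(z, y) ≤ 2 (τ⁻¹ ⟨M_z z, z⟩ + σ⁻¹ ⟨M_y y, y⟩)`, from which (ii) follows since
`min {γ_z τ, γ_y σ}` is at most `γ_z τ` and at most `γ_y σ`. -/

open scoped RealInnerProductSpace

lemma two_mul_abs_le_mul_sq_add_inv_mul_sq {a b c σ : ℝ} (hσ : 0 < σ) (hc : |c| ≤ a * b) :
    2 * |c| ≤ σ * a ^ 2 + σ⁻¹ * b ^ 2 := by
  have hσσ : σ * σ⁻¹ = 1 := mul_inv_cancel₀ hσ.ne'
  nlinarith [mul_nonneg (inv_nonneg.2 hσ.le) (sq_nonneg (σ * a - b))]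

lemma min_div_two_mul_le_of_le_two_mul {τ σ γz γy mz my Q : ℝ} (hτ : 0 < τ) (hσ : 0 < σ)
    (hγz : 0 ≤ γz) (hγy : 0 ≤ γy) (hmz : 0 ≤ mz) (hmy : 0 ≤ my)
    (hQ : Q ≤ 2 * (τ⁻¹ * mz + σ⁻¹ * my)) :
    min (γz * τ) (γy * σ) / 2 * Q ≤ γz * mz + γy * my := by
  have hγ : 0 ≤ min (γz * τ) (γy * σ) := le_min (by positivity) (by positivity)
  calc min (γz * τ) (γy * σ) / 2 * Q
      ≤ min (γz * τ) (γy * σ) / 2 * (2 * (τ⁻¹ * mz + σ⁻¹ * my)) := by gcongr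
    _ = min (γz * τ) (γy * σ) * τ⁻¹ * mz + min (γz * τ) (γy * σ) * σ⁻¹ * my := by ring
    _ ≤ γz * τ * τ⁻¹ * mz + γy * σ * σ⁻¹ * my := by
      gcongr
      exacts [min_le_left _ _, min_le_right _ _]
    _ = γz * mz + γy * my := by field_simp

section Coupling

variable {Z Y V : Type*} [NormedAddCommGroup Z] [NormedSpace ℝ Z]
  [NormedAddCommGroup Y] [NormedSpace ℝ Y] [NormedAddCommGroup V] [InnerProductSpace ℝ V]
  {Kz : Z →L[ℝ] V} {Ky : V →L[ℝ] StrongDual ℝ Y} {Kyd : Y →L[ℝ] V}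
  {Mz : Z →L[ℝ] StrongDual ℝ Z} {My : Y →L[ℝ] StrongDual ℝ Y} {τ σ lam : ℝ}

lemma two_mul_abs_coupling_le (hKyd : ∀ (v : V) (y : Y), Ky v y = ⟪v, Kyd y⟫)
    (hτ : 0 < τ) (hσ : 0 < σ) (hstepy : ∀ y : Y, ‖Kyd y‖ ^ 2 ≤ My y y)
    (hstepz : ∀ z : Z, τ * lam * Mz z z + τ * σ * ‖Kz z‖ ^ 2 ≤ Mz z z) (z : Z) (y : Y) :
    2 * |Ky (Kz z) y| ≤ τ⁻¹ * Mz z z - lam * Mz z z + σ⁻¹ * My y y := by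
  have hcs : |Ky (Kz z) y| ≤ ‖Kz z‖ * ‖Kyd y‖ := by
    rw [hKyd]
    exact abs_real_inner_le_norm _ _
  have hz : σ * ‖Kz z‖ ^ 2 ≤ τ⁻¹ * Mz z z - lam * Mz z z := by
    have := mul_le_mul_of_nonneg_left (hstepz z) (inv_nonneg.2 hτ.le)
    field_simp at this ⊢
    linarith
  have hy : σ⁻¹ * ‖Kyd y‖ ^ 2 ≤ σ⁻¹ * My y y :=
    mul_le_mul_of_nonneg_left (hstepy y) (inv_nonneg.2 hσ.le)
  linarith [two_mul_abs_le_mul_sq_add_inv_mul_sq hσ hcs]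

end Coupling

theorem stmt10_general {Z Y V : Type*}
    [NormedAddCommGroup Z] [NormedSpace ℝ Z]
    [NormedAddCommGroup Y] [NormedSpace ℝ Y]
    [NormedAddCommGroup V] [InnerProductSpace ℝ V]
    (Kz : Z →L[ℝ] V) (Ky : V →L[ℝ] StrongDual ℝ Y) (Kyd : Y →L[ℝ] V)
    (hKyd : ∀ (v : V) (y : Y), Ky v y = ⟪v, Kyd y⟫)
    (Mz : Z →L[ℝ] StrongDual ℝ Z) (My : Y →L[ℝ] StrongDual ℝ Y)
    (hMzpsd : ∀ z : Z, 0 ≤ Mz z z)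
    (hMypsd : ∀ y : Y, 0 ≤ My y y)
    (τ σ lam : ℝ) (hτ : 0 < τ) (hσ : 0 < σ) (hlam : 0 ≤ lam)
    (hstepy : ∀ y : Y, ‖Kyd y‖ ^ 2 ≤ My y y)
    (hstepz : ∀ z : Z, τ * lam * Mz z z + τ * σ * ‖Kz z‖ ^ 2 ≤ Mz z z) :
    (∀ (z : Z) (y : Y),
      lam * Mz z z ≤ τ⁻¹ * Mz z z + σ⁻¹ * My y y - 2 * Ky (Kz z) y
        ∧ 0 ≤ lam * Mz z z)
    ∧ ∀ γz γy : ℝ, 0 ≤ γz → 0 ≤ γy → ∀ (z : Z) (y : Y),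
        min (γz * τ) (γy * σ) / 2
            * (τ⁻¹ * Mz z z + σ⁻¹ * My y y - 2 * Ky (Kz z) y)
          ≤ γz * Mz z z + γy * My y y := by
  have hcoupling := two_mul_abs_coupling_le hKyd hτ hσ hstepy hstepz
  refine ⟨fun z y => ⟨?_, mul_nonneg hlam (hMzpsd z)⟩, fun γz γy hγz hγy z y => ?_⟩
  · linarith [hcoupling z y, le_abs_self (Ky (Kz z) y)]
  · refine min_div_two_mul_le_of_le_two_mul hτ hσ hγz hγy (hMzpsd z) (hMypsd y) ?_
    linarith [hcoupling z y, neg_abs_le (Ky (Kz z) y), mul_nonneg hlam (hMzpsd z)]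

theorem stmt10 {Z Y V : Type*}
    [NormedAddCommGroup Z] [NormedSpace ℝ Z]
    [NormedAddCommGroup Y] [NormedSpace ℝ Y]
    [NormedAddCommGroup V] [InnerProductSpace ℝ V] [CompleteSpace V]
    (Kz : Z →L[ℝ] V) (Ky : V →L[ℝ] StrongDual ℝ Y) (Kyd : Y →L[ℝ] V)
    (hKyd : ∀ (v : V) (y : Y), Ky v y = ⟪v, Kyd y⟫)
    (Mz : Z →L[ℝ] StrongDual ℝ Z) (My : Y →L[ℝ] StrongDual ℝ Y)
    (hMzsa : ∀ z w : Z, Mz z w = Mz w z) (hMzpsd : ∀ z : Z, 0 ≤ Mz z z)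
    (hMysa : ∀ y w : Y, My y w = My w y) (hMypsd : ∀ y : Y, 0 ≤ My y y)
    (τ σ lam : ℝ) (hτ : 0 < τ) (hσ : 0 < σ) (hlam : 0 ≤ lam)
    (hstepy : ∀ y : Y, ‖Kyd y‖ ^ 2 ≤ My y y)
    (hstepz : ∀ z : Z, τ * lam * Mz z z + τ * σ * ‖Kz z‖ ^ 2 ≤ Mz z z) :
    (∀ (z : Z) (y : Y),
      lam * Mz z z ≤ τ⁻¹ * Mz z z + σ⁻¹ * My y y - 2 * Ky (Kz z) y
        ∧ 0 ≤ lam * Mz z z)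
    ∧ ∀ γz γy : ℝ, 0 ≤ γz → 0 ≤ γy → ∀ (z : Z) (y : Y),
        min (γz * τ) (γy * σ) / 2
            * (τ⁻¹ * Mz z z + σ⁻¹ * My y y - 2 * Ky (Kz z) y)
          ≤ γz * Mz z z + γy * My y y :=
  stmt10_general Kz Ky Kyd hKyd Mz My hMzpsd hMypsd τ σ lam hτ hσ hlam hstepy hstepz
end

section
/- Let Z, Y be real Hilbert spaces, g : Z → ℝ ∪ {+∞} proper, convex, lower semicontinuous and γ_g-strongly convex with γ_g > 0, and h : Y → ℝ ∪ {+∞} proper, convex, lower semicontinuous and γ_h-strongly convex with γ_h ≥ 0. Let K : Z → Y and A : Y → Z be bounded linear (A is a 'mismatched adjoint' of K), and τ, σ > 0 with τσ‖K‖² ≤ 1. Given (z^0, y^0) ∈ Z × Y, define for k ≥ 0: z^{k+1} := prox_{τg}(z^k − τ A y^k) and y^{k+1} := prox_{σh}(y^k + σ K(2z^{k+1} − z^k)). Set γ := min{γ_g τ/4, γ_h σ/2} and q_M(z, y) := τ^{−1}‖z‖² + σ^{−1}‖y‖² − 2⟨Kz, y⟩. Then for every k ≥ 0, every (z̄, ȳ)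 ∈ Z × Y, every z̄* ∈ ∂g(z̄) and every ȳ* ∈ ∂h(ȳ): ⟨−τ^{−1}(z^{k+1} − z^k) + K*(y^{k+1} − y^k) − z̄* − K*ȳ, z^{k+1} − z̄⟩ + ⟨−σ^{−1}(y^{k+1} − y^k) + K(z^{k+1} − z^k) − ȳ* + Kz̄, y^{k+1} − ȳ⟩ ≥ γ q_M(z^{k+1} − z̄, y^{k+1} − ȳ) − (1/(2γ_g)) ‖(A − K*) y^k‖². -/
open scoped RealInnerProductSpace

/-- Convexity of an `ℝ ∪ {+∞}`-valued (extended-real-valued) function. -/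
def ConvexE {Z : Type*} [AddCommGroup Z] [Module ℝ Z] (f : Z → EReal) : Prop :=
  ∀ x y : Z, ∀ t : ℝ, 0 ≤ t → t ≤ 1 →
    f (t • x + (1 - t) • y) ≤ (t : EReal) * f x + ((1 - t : ℝ) : EReal) * f y

/-- Properness: not identically `+∞`, never `−∞`. -/
def ProperE {Z : Type*} (f : Z → EReal) : Prop :=
  (∃ z, f z ≠ ⊤) ∧ ∀ z, f z ≠ ⊥

/-- The convex subdifferential `∂f(x̄) = {z* : f(z) ≥ f(x̄) + ⟨z*, z − x̄⟩ ∀z}`. -/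
def subdiffE {Z : Type*} [NormedAddCommGroup Z] [InnerProductSpace ℝ Z]
    (f : Z → EReal) (x : Z) : Set Z :=
  {g | ∀ z : Z, f x + ((⟪g, z - x⟫ : ℝ) : EReal) ≤ f z}

/-- `x = prox_f(w)`, i.e. `x` minimises `u ↦ f(u) + (1/2)‖u − w‖²`. -/
def IsProxE {Z : Type*} [NormedAddCommGroup Z] [InnerProductSpace ℝ Z]
    (f : Z → EReal) (w x : Z) : Prop :=
  ∀ u : Z, f x + (((1 / 2) * ‖x - w‖ ^ 2 : ℝ) : EReal)
    ≤ f u + (((1 / 2) * ‖u - w‖ ^ 2 : ℝ) : EReal)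

lemma fin_of_subdiff {Z : Type*} [NormedAddCommGroup Z] [InnerProductSpace ℝ Z]
    {f : Z → EReal} (hp : ProperE f) {xb s : Z} (hs : s ∈ subdiffE f xb) :
    ∃ r : ℝ, f xb = (r : EReal) := by
  refine ⟨(f xb).toReal, (EReal.coe_toReal ?_ (hp.2 xb)).symm⟩
  intro htop
  obtain ⟨u0, hu0⟩ := hp.1
  have h := hs u0
  rw [htop, EReal.top_add_coe, top_le_iff] at h
  exact hu0 h

/-- limit helper -/
lemma limit_helper {a b c : ℝ} (hc : 0 ≤ c) (h : ∀ t : ℝ, 0 < t → t ≤ 1 → a ≤ b + c * t) :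
    a ≤ b := by
  have h2 : ∀ n : ℕ, a ≤ b + c * (1 / (n + 1)) := by
    intro n
    refine h _ (by positivity) ?_
    rw [div_le_one (by positivity)]
    linarith [Nat.cast_nonneg (α := ℝ) n]
  have ht : Filter.Tendsto (fun n : ℕ => b + c * (1 / (n + 1))) Filter.atTop (nhds (b + c * 0)) :=
    (tendsto_one_div_add_atTop_nhds_zero_nat.const_mul c).const_add b
  rw [mul_zero, add_zero] at ht
  exact ge_of_tendsto ht (Filter.Eventually.of_forall h2)

lemma improved_subgrad {Z : Type*} [NormedAddCommGroup Z] [InnerProductSpace ℝ Z]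
    {f : Z → EReal} {γ : ℝ} (hγ : 0 ≤ γ) (hp : ProperE f)
    (hsc : ConvexE fun z => f z - (((γ / 2) * ‖z‖ ^ 2 : ℝ) : EReal))
    {xb s : Z} (hs : s ∈ subdiffE f xb) (z : Z) :
    f xb + ((⟪s, z - xb⟫ + (γ / 2) * ‖z - xb‖ ^ 2 : ℝ) : EReal) ≤ f z := by
  obtain ⟨r, hr⟩ := fin_of_subdiff hp hs
  by_cases hzt : f z = ⊤
  · rw [hzt]; exact le_top
  obtain ⟨sv, hsv⟩ : ∃ sv : ℝ, f z = (sv : EReal) :=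
    ⟨(f z).toReal, (EReal.coe_toReal hzt (hp.2 z)).symm⟩
  set d := z - xb with hd
  -- per-t inequality
  have key : ∀ t : ℝ, 0 < t → t ≤ 1 →
      ⟪s, d⟫ + (γ / 2) * ‖d‖ ^ 2 ≤ (sv - r) + ((γ / 2) * ‖d‖ ^ 2) * t := by
    intro t ht0 ht1
    set pt := t • z + (1 - t) • xb with hpt
    have hconv := hsc z xb t ht0.le ht1
    simp only at hconv
    rw [hsv, hr, ← EReal.coe_sub, ← EReal.coe_sub,
      ← EReal.coe_mul, ← EReal.coe_mul, ← EReal.coe_add] at hconv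
    -- f pt is finite
    have hptb : f pt ≠ ⊥ := hp.2 pt
    have hptt : f pt ≠ ⊤ := by
      intro htop
      rw [show ((t • z + (1 - t) • xb)) = pt from rfl, htop, EReal.top_sub_coe, top_le_iff] at hconv
      exact EReal.coe_ne_top _ hconv
    obtain ⟨m, hm⟩ : ∃ m : ℝ, f pt = (m : EReal) :=
      ⟨(f pt).toReal, (EReal.coe_toReal hptt hptb).symm⟩
    rw [show ((t • z + (1 - t) • xb)) = pt from rfl, hm, ← EReal.coe_sub, EReal.coe_le_coe_iff] at hconv
    have hsub := hs pt
    rw [hr, hm, ← EReal.coe_add, EReal.coe_le_coe_iff] at hsub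
    have hptxb : pt - xb = t • d := by
      rw [hpt, hd]; module
    rw [hptxb, real_inner_smul_right] at hsub
    have hptval : pt = xb + t • d := by rw [hpt, hd]; module
    have hnpt : ‖pt‖ ^ 2 = ‖xb‖ ^ 2 + 2 * (t * ⟪xb, d⟫) + t ^ 2 * ‖d‖ ^ 2 := by
      rw [hptval, @norm_add_sq_real, real_inner_smul_right, norm_smul,
        Real.norm_eq_abs, abs_of_pos ht0, mul_pow]
    have hnz : ‖z‖ ^ 2 = ‖xb‖ ^ 2 + 2 * ⟪xb, d⟫ + ‖d‖ ^ 2 := by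
      have : z = xb + d := by rw [hd]; abel
      rw [this, @norm_add_sq_real]
    -- combine: hconv : m - γ/2‖pt‖² ≤ t(sv−γ/2‖z‖²)+(1−t)(r−γ/2‖xb‖²), hsub : r + t⟪s,d⟫ ≤ m
    rw [hnpt, hnz] at hconv
    have hdiv : t * (⟪s, d⟫ + (γ/2)*‖d‖^2) ≤ t * ((sv - r) + ((γ/2)*‖d‖^2)*t) := by nlinarith
    exact le_of_mul_le_mul_left hdiv ht0
  have main : ⟪s, d⟫ + (γ / 2) * ‖d‖ ^ 2 ≤ sv - r :=
    limit_helper (by positivity) key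
  rw [hr, hsv, ← EReal.coe_add, EReal.coe_le_coe_iff]
  linarith

lemma strong_mono {Z : Type*} [NormedAddCommGroup Z] [InnerProductSpace ℝ Z]
    {f : Z → EReal} {γ : ℝ} (hγ : 0 ≤ γ) (hp : ProperE f)
    (hsc : ConvexE fun z => f z - (((γ / 2) * ‖z‖ ^ 2 : ℝ) : EReal))
    {x xb p s : Z} (hpx : p ∈ subdiffE f x) (hs : s ∈ subdiffE f xb) :
    γ * ‖x - xb‖ ^ 2 ≤ ⟪p - s, x - xb⟫ := by
  obtain ⟨r, hr⟩ := fin_of_subdiff hp hs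
  obtain ⟨m, hm⟩ := fin_of_subdiff hp hpx
  have h1 := improved_subgrad hγ hp hsc hs x
  have h2 := improved_subgrad hγ hp hsc hpx xb
  rw [hr, hm, ← EReal.coe_add, EReal.coe_le_coe_iff] at h1
  rw [hm, hr, ← EReal.coe_add, EReal.coe_le_coe_iff] at h2
  rw [inner_sub_left]
  have hsym : ⟪p, xb - x⟫ = -⟪p, x - xb⟫ := by
    rw [show xb - x = -(x - xb) by abel, inner_neg_right]
  have hnrm : ‖xb - x‖ = ‖x - xb‖ := norm_sub_rev _ _
  rw [hsym, hnrm] at h2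
  linarith

lemma prox_subgrad {Z : Type*} [NormedAddCommGroup Z] [InnerProductSpace ℝ Z]
    {f : Z → EReal} {τ : ℝ} (hτ : 0 < τ) (hp : ProperE f) (hconv : ConvexE f)
    {w x : Z} (hx : IsProxE (fun u => (τ : EReal) * f u) w x) :
    τ⁻¹ • (w - x) ∈ subdiffE f x := by
  have hfin : ∀ v : Z, f v ≠ ⊤ → ∃ m : ℝ, f v = (m : EReal) :=
    fun v hv => ⟨(f v).toReal, (EReal.coe_toReal hv (hp.2 v)).symm⟩
  -- f x is finite
  obtain ⟨u0, hu0⟩ := hp.1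
  obtain ⟨s0, hs0⟩ := hfin u0 hu0
  have hxt : f x ≠ ⊤ := by
    intro htop
    have h := hx u0
    simp only at h
    rw [htop, hs0, EReal.coe_mul_top_of_pos hτ, EReal.top_add_coe, top_le_iff,
      ← EReal.coe_mul, ← EReal.coe_add] at h
    exact EReal.coe_ne_top _ h
  obtain ⟨r, hr⟩ := hfin x hxt
  intro u
  by_cases hut : f u = ⊤
  · rw [hut]; exact le_top
  obtain ⟨s, hs⟩ := hfin u hut
  have key : ∀ t : ℝ, 0 < t → t ≤ 1 →
      τ * (r - s) - ⟪x - w, u - x⟫ ≤ 0 + ((1/2) * ‖u - x‖ ^ 2) * t := by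
    intro t ht0 ht1
    set pt := t • u + (1 - t) • x with hpt
    have hcv := hconv u x t ht0.le ht1
    rw [hs, hr, ← EReal.coe_mul, ← EReal.coe_mul, ← EReal.coe_add] at hcv
    have hptt : f pt ≠ ⊤ := fun htop => by
      rw [show t • u + (1 - t) • x = pt from rfl, htop, top_le_iff] at hcv
      exact EReal.coe_ne_top _ hcv
    obtain ⟨m, hm⟩ := hfin pt hptt
    rw [show t • u + (1 - t) • x = pt from rfl, hm, EReal.coe_le_coe_iff] at hcv
    have hprox := hx pt
    simp only at hprox
    rw [hr, hm, ← EReal.coe_mul, ← EReal.coe_mul, ← EReal.coe_add, ← EReal.coe_add,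
      EReal.coe_le_coe_iff] at hprox
    have hptw : pt - w = (x - w) + t • (u - x) := by rw [hpt]; module
    have hnpt : ‖pt - w‖ ^ 2 = ‖x - w‖ ^ 2 + 2 * (t * ⟪x - w, u - x⟫) + t ^ 2 * ‖u - x‖ ^ 2 := by
      rw [hptw, @norm_add_sq_real, real_inner_smul_right, norm_smul,
        Real.norm_eq_abs, abs_of_pos ht0, mul_pow]
    rw [hnpt] at hprox
    have hdiv : t * (τ * (r - s) - ⟪x - w, u - x⟫) ≤ t * (0 + ((1/2) * ‖u - x‖ ^ 2) * t) := by
      nlinarith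
    exact le_of_mul_le_mul_left hdiv ht0
  have main : τ * (r - s) - ⟪x - w, u - x⟫ ≤ 0 := limit_helper (by positivity) key
  rw [hr, hs, ← EReal.coe_add, EReal.coe_le_coe_iff, real_inner_smul_left]
  have hinner : ⟪w - x, u - x⟫ = -⟪x - w, u - x⟫ := by
    rw [show w - x = -(x - w) by abel, inner_neg_left]
  rw [hinner]
  have h1 : τ * (r - s) ≤ ⟪x - w, u - x⟫ := by linarith
  have h2 := mul_le_mul_of_nonneg_left h1 (inv_pos.mpr hτ).le
  rw [← mul_assoc, inv_mul_cancel₀ hτ.ne', one_mul] at h2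
  linarith

lemma amgm {τ σ Kn a b : ℝ} (hτ : 0 < τ) (hσ : 0 < σ) (hKn : 0 ≤ Kn)
    (hstep : τ * σ * Kn ^ 2 ≤ 1) (ha : 0 ≤ a) (hb : 0 ≤ b) :
    2 * Kn * a * b ≤ τ⁻¹ * a ^ 2 + σ⁻¹ * b ^ 2 := by
  set u := Real.sqrt τ with hu
  set v := Real.sqrt σ with hv
  have hu0 : 0 < u := Real.sqrt_pos.mpr hτ
  have hv0 : 0 < v := Real.sqrt_pos.mpr hσ
  have hsqτ : u ^ 2 = τ := Real.sq_sqrt hτ.le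
  have hsqσ : v ^ 2 = σ := Real.sq_sqrt hσ.le
  have hKuv : Kn * (u * v) ≤ 1 := by
    have h2 : (Kn * (u * v)) ^ 2 ≤ 1 := by
      have : (Kn * (u * v)) ^ 2 = τ * σ * Kn ^ 2 := by
        rw [mul_pow, mul_pow, hsqτ, hsqσ]; ring
      linarith [this ▸ hstep]
    nlinarith [sq_nonneg (Kn * (u * v) - 1), mul_nonneg hKn (mul_nonneg hu0.le hv0.le)]
  have hA : a = (a / u) * u := (div_mul_cancel₀ a hu0.ne').symm
  have hB : b = (b / v) * v := (div_mul_cancel₀ b hv0.ne').symm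
  set A' := a / u with hA'
  set B' := b / v with hB'
  have hA0 : 0 ≤ A' := div_nonneg ha hu0.le
  have hB0 : 0 ≤ B' := div_nonneg hb hv0.le
  rw [hA, hB]
  have h1 : 2 * Kn * (A' * u) * (B' * v) = (Kn * (u * v)) * (2 * (A' * B')) := by ring
  have h2 : (Kn * (u * v)) * (2 * (A' * B')) ≤ 1 * (2 * (A' * B')) :=
    mul_le_mul_of_nonneg_right hKuv (by positivity)
  have h3 : 2 * (A' * B') ≤ A' ^ 2 + B' ^ 2 := by nlinarith [sq_nonneg (A' - B')]
  have h4 : τ⁻¹ * (A' * u) ^ 2 = A' ^ 2 := by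
    rw [mul_pow, hsqτ]; field_simp
  have h5 : σ⁻¹ * (B' * v) ^ 2 = B' ^ 2 := by
    rw [mul_pow, hsqσ]; field_simp
  rw [h1, h4, h5]
  linarith

set_option maxHeartbeats 1000000 in
theorem stmt11 {Z Y : Type*}
    [NormedAddCommGroup Z] [InnerProductSpace ℝ Z] [CompleteSpace Z]
    [NormedAddCommGroup Y] [InnerProductSpace ℝ Y] [CompleteSpace Y]
    (g : Z → EReal) (h : Y → EReal) (γg γh : ℝ) (hγg : 0 < γg) (hγh : 0 ≤ γh)
    (hgproper : ProperE g) (hgconv : ConvexE g) (hglsc : LowerSemicontinuous g)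
    (hgstrong : ConvexE fun z => g z - (((γg / 2) * ‖z‖ ^ 2 : ℝ) : EReal))
    (hhproper : ProperE h) (hhconv : ConvexE h) (hhlsc : LowerSemicontinuous h)
    (hhstrong : ConvexE fun y => h y - (((γh / 2) * ‖y‖ ^ 2 : ℝ) : EReal))
    (K : Z →L[ℝ] Y) (A : Y →L[ℝ] Z)
    (τ σ : ℝ) (hτ : 0 < τ) (hσ : 0 < σ) (hstep : τ * σ * ‖K‖ ^ 2 ≤ 1)
    (z : ℕ → Z) (y : ℕ → Y)
    (hz : ∀ k : ℕ, IsProxE (fun u => (τ : EReal) * g u)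
            (z k - τ • A (y k)) (z (k + 1)))
    (hy : ∀ k : ℕ, IsProxE (fun u => (σ : EReal) * h u)
            (y k + σ • K ((2 : ℝ) • z (k + 1) - z k)) (y (k + 1))) :
    ∀ k : ℕ, ∀ (zb : Z) (yb : Y) (zs : Z) (ys : Y),
      zs ∈ subdiffE g zb → ys ∈ subdiffE h yb →
      ⟪-(τ⁻¹ • (z (k + 1) - z k)) + (ContinuousLinearMap.adjoint K) (y (k + 1) - y k)
          - zs - (ContinuousLinearMap.adjoint K) yb, z (k + 1) - zb⟫
        + ⟪-(σ⁻¹ • (y (k + 1) - y k)) + K (z (k + 1) - z k) - ys + K zb, y (k + 1) - yb⟫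
      ≥ min (γg * τ / 4) (γh * σ / 2)
            * (τ⁻¹ * ‖z (k + 1) - zb‖ ^ 2 + σ⁻¹ * ‖y (k + 1) - yb‖ ^ 2
                - 2 * ⟪K (z (k + 1) - zb), y (k + 1) - yb⟫)
          - (1 / (2 * γg)) * ‖(A - ContinuousLinearMap.adjoint K) (y k)‖ ^ 2 := by
  intro k zb yb zs ys hzs hys
  -- subgradients from prox steps
  have hp := prox_subgrad hτ hgproper hgconv (hz k)
  have hq := prox_subgrad hσ hhproper hhconv (hy k)
  have hp' : τ⁻¹ • (z k - τ • A (y k) - z (k + 1))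
      = τ⁻¹ • (z k - z (k + 1)) - A (y k) := by
    rw [show z k - τ • A (y k) - z (k + 1) = (z k - z (k + 1)) - τ • A (y k) by abel,
      smul_sub, smul_smul, inv_mul_cancel₀ hτ.ne', one_smul]
  have hq' : σ⁻¹ • (y k + σ • K ((2 : ℝ) • z (k + 1) - z k) - y (k + 1))
      = σ⁻¹ • (y k - y (k + 1)) + K ((2 : ℝ) • z (k + 1) - z k) := by
    rw [show y k + σ • K ((2 : ℝ) • z (k + 1) - z k) - y (k + 1)
        = (y k - y (k + 1)) + σ • K ((2 : ℝ) • z (k + 1) - z k) by abel,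
      smul_add, smul_smul, inv_mul_cancel₀ hσ.ne', one_smul]
  rw [hp'] at hp
  rw [hq'] at hq
  have hM1 := strong_mono hγg.le hgproper hgstrong hp hzs
  have hM2 := strong_mono hγh hhproper hhstrong hq hys
  set Kd := ContinuousLinearMap.adjoint K with hKd
  have flipK : ∀ (v : Y) (w : Z), ⟪Kd v, w⟫ = ⟪K w, v⟫ := fun v w => by
    rw [hKd, ContinuousLinearMap.adjoint_inner_left, real_inner_comm]
  -- the algebraic identity
  have hEq : ⟪-(τ⁻¹ • (z (k + 1) - z k)) + Kd (y (k + 1) - y k) - zs - Kd yb, z (k + 1) - zb⟫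
        + ⟪-(σ⁻¹ • (y (k + 1) - y k)) + K (z (k + 1) - z k) - ys + K zb, y (k + 1) - yb⟫
      = ⟪τ⁻¹ • (z k - z (k + 1)) - A (y k) - zs, z (k + 1) - zb⟫
        + ⟪σ⁻¹ • (y k - y (k + 1)) + K ((2 : ℝ) • z (k + 1) - z k) - ys, y (k + 1) - yb⟫
        + ⟪(A - Kd) (y k), z (k + 1) - zb⟫ := by
    simp only [ContinuousLinearMap.sub_apply, map_sub, map_add, map_smul, flipK,
      inner_add_left, inner_sub_left, inner_neg_left, inner_add_right, inner_sub_right,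
      real_inner_smul_left, real_inner_smul_right]
    ring
  rw [hEq]
  -- notation
  set a := ‖z (k + 1) - zb‖ with hadef
  set b := ‖y (k + 1) - yb‖ with hbdef
  set E := ‖(A - Kd) (y k)‖ with hEdef
  set c := (⟪K (z (k + 1) - zb), y (k + 1) - yb⟫ : ℝ) with hcdef
  have ha0 : 0 ≤ a := norm_nonneg _
  have hb0 : 0 ≤ b := norm_nonneg _
  -- Cauchy-Schwarz bounds
  have hip : -(E * a) ≤ ⟪(A - Kd) (y k), z (k + 1) - zb⟫ := by
    have h1 := abs_real_inner_le_norm ((A - Kd) (y k)) (z (k + 1) - zb)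
    have h2 := neg_abs_le (⟪(A - Kd) (y k), z (k + 1) - zb⟫ : ℝ)
    rw [← hEdef, ← hadef] at h1
    linarith
  have hc : -(‖K‖ * a * b) ≤ c := by
    have h1 := abs_real_inner_le_norm (K (z (k + 1) - zb)) (y (k + 1) - yb)
    have h2 := neg_abs_le c
    have h3 : ‖K (z (k + 1) - zb)‖ ≤ ‖K‖ * a := K.le_opNorm _
    rw [← hbdef, ← hcdef] at h1
    nlinarith [norm_nonneg (K (z (k + 1) - zb))]
  -- AM-GM bound on the coupling term
  have hkey : 2 * ‖K‖ * a * b ≤ τ⁻¹ * a ^ 2 + σ⁻¹ * b ^ 2 :=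
    amgm hτ hσ (norm_nonneg K) hstep ha0 hb0
  have hqm : τ⁻¹ * a ^ 2 + σ⁻¹ * b ^ 2 - 2 * c ≤ 2 * (τ⁻¹ * a ^ 2 + σ⁻¹ * b ^ 2) := by
    linarith
  set γ := min (γg * τ / 4) (γh * σ / 2) with hγdef
  have hγ0 : 0 ≤ γ :=
    le_min (div_nonneg (mul_nonneg hγg.le hτ.le) (by norm_num))
      (div_nonneg (mul_nonneg hγh hσ.le) (by norm_num))
  have hγ1 : γ ≤ γg * τ / 4 := min_le_left _ _
  have hγ2 : γ ≤ γh * σ / 2 := min_le_right _ _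
  have hτa : 0 ≤ τ⁻¹ * a ^ 2 := mul_nonneg (inv_nonneg.mpr hτ.le) (sq_nonneg a)
  have hσb : 0 ≤ σ⁻¹ * b ^ 2 := mul_nonneg (inv_nonneg.mpr hσ.le) (sq_nonneg b)
  have c1 : γ * (τ⁻¹ * a ^ 2 + σ⁻¹ * b ^ 2 - 2 * c)
      ≤ γ * (2 * (τ⁻¹ * a ^ 2 + σ⁻¹ * b ^ 2)) := mul_le_mul_of_nonneg_left hqm hγ0
  have c3 : 2 * γ * (τ⁻¹ * a ^ 2) ≤ 2 * (γg * τ / 4) * (τ⁻¹ * a ^ 2) :=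
    mul_le_mul_of_nonneg_right (by linarith) hτa
  have c5 : 2 * γ * (σ⁻¹ * b ^ 2) ≤ 2 * (γh * σ / 2) * (σ⁻¹ * b ^ 2) :=
    mul_le_mul_of_nonneg_right (by linarith) hσb
  have hττ : τ * τ⁻¹ = 1 := mul_inv_cancel₀ hτ.ne'
  have hσσ : σ * σ⁻¹ = 1 := mul_inv_cancel₀ hσ.ne'
  have c4 : 2 * (γg * τ / 4) * (τ⁻¹ * a ^ 2) = (γg / 2) * a ^ 2 := by
    field_simp; ring
  have c6 : 2 * (γh * σ / 2) * (σ⁻¹ * b ^ 2) = γh * b ^ 2 := by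
    field_simp
  -- Young's inequality on the mismatch term
  have hYoung : E * a ≤ (γg / 2) * a ^ 2 + (1 / (2 * γg)) * E ^ 2 := by
    have hinv : (1 / (2 * γg)) * (2 * γg) = 1 := by field_simp
    nlinarith [sq_nonneg (γg * a - E), hγg, hinv]
  linarith [hM1, hM2, hip, hYoung, c1, c3, c5]
end

section
/- Let X be a real normed space, M : X → X* bounded linear, self-adjoint and positive semi-definite, and (x^k)_{k≥0} ⊂ X with v^{k+1} := −M(x^{k+1} − x^k). Let F : X → ℝ, G : X → ℝ ∪ {+∞} proper, Ξ : X → X* bounded linear skew-adjoint, and let 𝒢 be the Lagrangian gap. Suppose: Ω ⊆ X with x^0 ∈ Ω; η > 0; Λ̆ : X → X* is self-adjoint with Λ̆ ≤ 2(1−η)M; (ε_k)_{k≥0} ⊂ ℝ satisfies r := sup_{N∈ℕ} Σ_{k=0}^{N−1} ε_k < ∞; whenever x^0, …, x^k ∈ Ω, the descent inequality ⟨v^{k+1}, x^{k+1} − x^k⟩ ≥ 𝒢(x^{k+1}; x^k) − (1/2)‖x^{k+1} − x^k‖_{Λ̆}² − ε_k holds; and for every N ≥ 1, Σ_{k=0}^{N−1}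 𝒢(x^{k+1}; x^k) ≤ r implies x^N ∈ Ω. Then x^k ∈ Ω for every k ≥ 0, and for every k ≥ 0: 𝒢(x^{k+1}; x^k) + η ‖x^{k+1} − x^k‖_M² ≤ ε_k. -/
/-!
If the iterates stay in `Ω` up to step `k`, the descent inequality together with
`Λ̆ ≤ 2(1 - η)M` gives `𝒢(x^{k+1}; x^k) + η‖x^{k+1} - x^k‖²_M ≤ ε_k`, and in particular
`𝒢(x^{k+1}; x^k) ≤ ε_k` since `M ≥ 0`. Summing, the accumulated gap up to step `N` is bounded by
`∑_{k<N} ε_k ≤ r`, so `x^N ∈ Ω`; strong induction on `N` keeps every iterate in `Ω`.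
-/

@[norm_cast]
lemma EReal.coe_finset_sum {ι : Type*} (s : Finset ι) (f : ι → ℝ) :
    ((∑ i ∈ s, f i : ℝ) : EReal) = ∑ i ∈ s, (f i : EReal) :=
  map_sum (⟨⟨(↑), EReal.coe_zero⟩, EReal.coe_add⟩ : ℝ →+ EReal) f s

lemma EReal.add_coe_le_of_sub_sub_le {a : EReal} {m c e η : ℝ} (hc : c ≤ 2 * (1 - η) * m)
    (h : a - ((1 / 2 * c : ℝ) : EReal) - (e : EReal) ≤ ((-m : ℝ) : EReal)) :
    a + ((η * m : ℝ) : EReal) ≤ e := by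
  have ha : a ≤ ((-m + e + 1 / 2 * c : ℝ) : EReal) := by
    have sub_coe_le {u v : EReal} {t : ℝ} : u - t ≤ v → u ≤ v + t :=
      (EReal.sub_le_iff_le_add (.inl (EReal.coe_ne_bot t)) (.inl (EReal.coe_ne_top t))).1
    rw [EReal.coe_add, EReal.coe_add]
    exact sub_coe_le (sub_coe_le h)
  calc a + ((η * m : ℝ) : EReal) ≤ ((-m + e + 1 / 2 * c : ℝ) : EReal) + ((η * m : ℝ) : EReal) :=
        add_le_add_left ha _
    _ = ((-m + e + 1 / 2 * c + η * m : ℝ) : EReal) := (EReal.coe_add _ _).symm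
    _ ≤ e := EReal.coe_le_coe_iff.2 (by linarith)

lemma forall_mem_of_sum_le {α β : Type*} [AddCommMonoid β] [PartialOrder β]
    [IsOrderedAddMonoid β] {x : ℕ → α} {Ω : Set α} {g b : ℕ → β} {r : β} (hx0 : x 0 ∈ Ω)
    (hb : ∀ N, ∑ k ∈ Finset.range N, b k ≤ r)
    (hg : ∀ k, (∀ n ≤ k, x n ∈ Ω) → g k ≤ b k)
    (hΩ : ∀ N, 1 ≤ N → ∑ k ∈ Finset.range N, g k ≤ r → x N ∈ Ω) (k : ℕ) : x k ∈ Ω := by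
  induction k using Nat.strong_induction_on with
  | _ N ih =>
    rcases N with _ | N
    · exact hx0
    refine hΩ (N + 1) N.succ_pos ((Finset.sum_le_sum fun j hj => hg j fun n hn => ih n ?_).trans
      (hb (N + 1)))
    exact hn.trans_lt (Finset.mem_range.1 hj)

theorem stmt12_general {X : Type*} [NormedAddCommGroup X] [NormedSpace ℝ X]
    (M : X →L[ℝ] StrongDual ℝ X)
    (hMpsd : ∀ u : X, 0 ≤ M u u)
    (x : ℕ → X)
    (gap : X → X → EReal)
    (Ω : Set X) (hx0 : x 0 ∈ Ω)
    (η : ℝ) (hη : 0 < η)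
    (Λb : X →L[ℝ] StrongDual ℝ X)
    (hΛbM : ∀ u : X, Λb u u ≤ 2 * (1 - η) * M u u)
    (ε : ℕ → ℝ) (r : ℝ)
    (hr : ∀ N : ℕ, ∑ k ∈ Finset.range N, ε k ≤ r)
    (hdesc : ∀ k : ℕ, (∀ n ≤ k, x n ∈ Ω) →
      gap (x (k + 1)) (x k)
          - (((1 / 2) * Λb (x (k + 1) - x k) (x (k + 1) - x k) : ℝ) : EReal)
          - ((ε k : ℝ) : EReal)
        ≤ (((-(M (x (k + 1) - x k))) (x (k + 1) - x k) : ℝ) : EReal))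
    (hΩimp : ∀ N : ℕ, 1 ≤ N →
      (∑ k ∈ Finset.range N, gap (x (k + 1)) (x k)) ≤ (r : EReal) → x N ∈ Ω) :
    (∀ k : ℕ, x k ∈ Ω)
    ∧ ∀ k : ℕ,
        gap (x (k + 1)) (x k)
            + ((η * M (x (k + 1) - x k) (x (k + 1) - x k) : ℝ) : EReal)
          ≤ ((ε k : ℝ) : EReal) := by
  have descent : ∀ k, (∀ n ≤ k, x n ∈ Ω) →
      gap (x (k + 1)) (x k) + ((η * M (x (k + 1) - x k) (x (k + 1) - x k) : ℝ) : EReal)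
        ≤ ((ε k : ℝ) : EReal) := fun k hk =>
    EReal.add_coe_le_of_sub_sub_le (hΛbM _) (by simpa only [neg_apply] using hdesc k hk)
  have gap_le : ∀ k, (∀ n ≤ k, x n ∈ Ω) → gap (x (k + 1)) (x k) ≤ ((ε k : ℝ) : EReal) :=
    fun k hk => (le_add_of_nonneg_right (EReal.coe_nonneg.2
      (mul_nonneg hη.le (hMpsd _)))).trans (descent k hk)
  have mem : ∀ k, x k ∈ Ω :=
    forall_mem_of_sum_le hx0 (fun N => by exact_mod_cast hr N) gap_le hΩimp
  exact ⟨mem, fun k => descent k fun n _ => mem n⟩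

theorem stmt12 {X : Type*} [NormedAddCommGroup X] [NormedSpace ℝ X]
    (M : X →L[ℝ] StrongDual ℝ X)
    (hMsa : ∀ u v : X, M u v = M v u) (hMpsd : ∀ u : X, 0 ≤ M u u)
    (x : ℕ → X)
    (F : X → ℝ) (G : X → EReal)
    (hGproper : (∃ u, G u ≠ ⊤) ∧ ∀ u, G u ≠ ⊥)
    (Ξ : X →L[ℝ] StrongDual ℝ X)
    (hΞskew : ∀ u v : X, Ξ u v = -(Ξ v u))
    (gap : X → X → EReal)
    (hgap : ∀ u v : X,
      gap u v = ((F u : EReal) + G u) - ((F v : EReal) + G v) - ((Ξ u v : ℝ) : EReal))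
    (Ω : Set X) (hx0 : x 0 ∈ Ω)
    (η : ℝ) (hη : 0 < η)
    (Λb : X →L[ℝ] StrongDual ℝ X)
    (hΛbsa : ∀ u v : X, Λb u v = Λb v u)
    (hΛbM : ∀ u : X, Λb u u ≤ 2 * (1 - η) * M u u)
    (ε : ℕ → ℝ) (r : ℝ)
    (hr : ∀ N : ℕ, ∑ k ∈ Finset.range N, ε k ≤ r)
    (hdesc : ∀ k : ℕ, (∀ n ≤ k, x n ∈ Ω) →
      gap (x (k + 1)) (x k)
          - (((1 / 2) * Λb (x (k + 1) - x k) (x (k + 1) - x k) : ℝ) : EReal)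
          - ((ε k : ℝ) : EReal)
        ≤ (((-(M (x (k + 1) - x k))) (x (k + 1) - x k) : ℝ) : EReal))
    (hΩimp : ∀ N : ℕ, 1 ≤ N →
      (∑ k ∈ Finset.range N, gap (x (k + 1)) (x k)) ≤ (r : EReal) → x N ∈ Ω) :
    (∀ k : ℕ, x k ∈ Ω)
    ∧ ∀ k : ℕ,
        gap (x (k + 1)) (x k)
            + ((η * M (x (k + 1) - x k) (x (k + 1) - x k) : ℝ) : EReal)
          ≤ ((ε k : ℝ) : EReal) :=
  stmt12_general M hMpsd x gap Ω hx0 η hη Λb hΛbM ε r hr hdesc hΩimp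
end

section
/- Let X be a real normed space, M : X → X* bounded linear, self-adjoint and positive semi-definite, and (x^k)_{k≥0} ⊂ X with v^{k+1} := −M(x^{k+1} − x^k). Let x̄ ∈ X, δ > 0, γ ≥ 0, η ≥ 0, let Λ̆ : X → X* be self-adjoint with 0 ≤ Λ̆ ≤ (1−η)M, let (ε_k)_{k≥0} ⊂ ℝ, and let p ∈ [1, p̄]. Assume either: (a) p̄ = 1 + 2γ and, whenever x^0, …, x^k ∈ 𝔒_M(x̄, δ), ⟨v^{k+1}, x^{k+1} − x̄⟩ ≥ γ ‖x^{k+1} − x̄‖_M² − (1/2)‖x^{k+1} − x^k‖_{Λ̆}² − ε_k; or (b) p̄ = 1 + γ, there is a function 𝒢(·; x̄) : X → ℝ ∪ {+∞} with 𝒢(x; x̄) ≥ 0 for all x ∈ X, and whenever x^0, …, x^k ∈ 𝔒_M(x̄, δ), ⟨v^{k+1}, x^{k+1} − x̄⟩ ≥ 𝒢(x^{k+1}; x̄) + (γ/2)‖x^{k+1} − x̄‖_M² − (1/2)‖x^{k+1} − x^k‖_{Λ̆}² − ε_k. Assume further r_p := sup_{N∈ℕ} Σ_{k=0}^{N−1}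 p^{k−N} ε_k satisfies r_p < δ²/2, and x^0 ∈ 𝔒_M(x̄, √(δ² − 2 r_p)). Then: x^k ∈ 𝔒_M(x̄, δ) for all k ≥ 0; the quasi-Féjer inequality (p/2)‖x^{k+1} − x̄‖_M² ≤ (1/2)‖x^k − x̄‖_M² + ε_k holds for all k ≥ 0; and if η > 0 then sup_{N∈ℕ} Σ_{k=0}^{N−1} p^{k−N} ‖x^{k+1} − x^k‖_M² < ∞. -/
/-! Write `a k = ‖x^k - x̄‖²_M` and `d k = ‖x^{k+1} - x^k‖²_M`. The three-point identity turns the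
hypothesis on `⟨v^{k+1}, x^{k+1} - x̄⟩` into the one-step descent `p a_{k+1} + η d_k ≤ a_k + 2 ε_k`,
valid while the iterates stay in the ball. Multiplying by `p^k` and telescoping gives
`p^N a_N + η ∑_{k<N} p^k d_k ≤ (a_0 + 2 r_p) p^N`, and `a_0 + 2 r_p < δ²` then keeps `x^N` in the
ball, so by strong induction the descent holds for every `k`. -/

open Finset

lemma two_mul_apply_sub_sub {X : Type*} [NormedAddCommGroup X] [NormedSpace ℝ X]
    (M : X →L[ℝ] StrongDual ℝ X) (hM : ∀ u v : X, M u v = M v u) (u v w : X) :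
    2 * M (u - v) (u - w) = M (u - v) (u - v) + M (u - w) (u - w) - M (v - w) (v - w) := by
  rw [show v - w = (u - w) - (u - v) by abel]
  simp only [map_sub, sub_apply]
  linarith [hM u v, hM u w, hM v w]

lemma EReal.le_of_nonneg_add_coe_le_coe {g : EReal} {a b : ℝ} (hg : 0 ≤ g)
    (h : g + a ≤ b) : a ≤ b := by
  exact_mod_cast (le_add_of_nonneg_left hg).trans h

lemma sum_range_pow_div_pow_mul_le_iff {p r : ℝ} (hp : 0 < p) (f : ℕ → ℝ) (N : ℕ) :
    ∑ k ∈ range N, p ^ k / p ^ N * f k ≤ r ↔ ∑ k ∈ range N, p ^ k * f k ≤ r * p ^ N := by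
  have hsum : ∑ k ∈ range N, p ^ k / p ^ N * f k = (∑ k ∈ range N, p ^ k * f k) / p ^ N := by
    rw [sum_div]
    exact sum_congr rfl fun k _ => div_mul_eq_mul_div _ _ _
  rw [hsum, div_le_iff₀ (pow_pos hp N)]

section WeightedDescent

variable {a d e : ℕ → ℝ} {p η r : ℝ}

lemma pow_mul_add_mul_sum_le_of_descent (hp : 0 ≤ p) (N : ℕ)
    (hstep : ∀ k < N, p * a (k + 1) + η * d k ≤ a k + 2 * e k) :
    p ^ N * a N + η * ∑ k ∈ range N, p ^ k * d k ≤ a 0 + 2 * ∑ k ∈ range N, p ^ k * e k := by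
  induction N with
  | zero => simp
  | succ N ih =>
    have hN := mul_le_mul_of_nonneg_left (hstep N N.lt_succ_self) (pow_nonneg hp N)
    have ih := ih fun k hk => hstep k (Nat.lt_succ_of_lt hk)
    rw [sum_range_succ, sum_range_succ, pow_succ]
    linear_combination ih + hN

lemma pow_mul_add_mul_sum_le (hp : 1 ≤ p) (ha0 : 0 ≤ a 0)
    (he : ∀ N : ℕ, ∑ k ∈ range N, p ^ k / p ^ N * e k ≤ r) (N : ℕ)
    (hstep : ∀ k < N, p * a (k + 1) + η * d k ≤ a k + 2 * e k) :
    p ^ N * a N + η * ∑ k ∈ range N, p ^ k * d k ≤ (a 0 + 2 * r) * p ^ N := by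
  have hp0 : 0 < p := by linarith
  have heN := (sum_range_pow_div_pow_mul_le_iff hp0 e N).1 (he N)
  have hpN : 1 ≤ p ^ N := one_le_pow₀ hp
  calc p ^ N * a N + η * ∑ k ∈ range N, p ^ k * d k
      ≤ a 0 + 2 * ∑ k ∈ range N, p ^ k * e k := pow_mul_add_mul_sum_le_of_descent hp0.le N hstep
    _ ≤ a 0 * p ^ N + 2 * (r * p ^ N) := by nlinarith
    _ = (a 0 + 2 * r) * p ^ N := by ring

lemma forall_lt_of_local_descent {R : ℝ} (hp : 1 ≤ p) (hη : 0 ≤ η) (hd : ∀ k, 0 ≤ d k)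
    (ha0 : 0 ≤ a 0) (he : ∀ N : ℕ, ∑ k ∈ range N, p ^ k / p ^ N * e k ≤ r)
    (hR : a 0 + 2 * r < R)
    (hstep : ∀ k, (∀ n ≤ k, a n < R) → p * a (k + 1) + η * d k ≤ a k + 2 * e k) :
    ∀ k, a k < R := by
  intro N
  induction N using Nat.strong_induction_on with
  | _ N ih =>
    have hN := pow_mul_add_mul_sum_le hp ha0 he N fun k hk =>
      hstep k fun n hn => ih n (lt_of_le_of_lt hn hk)
    have hdsum : 0 ≤ η * ∑ k ∈ range N, p ^ k * d k :=
      mul_nonneg hη (sum_nonneg fun k _ => mul_nonneg (pow_nonneg (by linarith) k) (hd k))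
    have hpN : 0 < p ^ N := pow_pos (by linarith) N
    refine lt_of_mul_lt_mul_left ?_ hpN.le
    nlinarith

lemma exists_sum_pow_div_pow_mul_le (hp : 1 ≤ p) (hη : 0 < η) (ha : ∀ k, 0 ≤ a k)
    (he : ∀ N : ℕ, ∑ k ∈ range N, p ^ k / p ^ N * e k ≤ r)
    (hstep : ∀ k, p * a (k + 1) + η * d k ≤ a k + 2 * e k) :
    ∃ C : ℝ, ∀ N : ℕ, ∑ k ∈ range N, p ^ k / p ^ N * d k ≤ C := by
  refine ⟨(a 0 + 2 * r) / η, fun N => ?_⟩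
  have hN := pow_mul_add_mul_sum_le hp (ha 0) he N fun k _ => hstep k
  have haN : 0 ≤ p ^ N * a N := mul_nonneg (pow_nonneg (by linarith) N) (ha N)
  rw [sum_range_pow_div_pow_mul_le_iff (by linarith) d N, div_mul_eq_mul_div, le_div_iff₀ hη]
  linarith

end WeightedDescent

theorem stmt14_general {X : Type*} [NormedAddCommGroup X] [NormedSpace ℝ X]
    (M : X →L[ℝ] StrongDual ℝ X)
    (hMsa : ∀ u v : X, M u v = M v u) (hMpsd : ∀ u : X, 0 ≤ M u u)
    (x : ℕ → X) (xb : X) (δ γ η : ℝ)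
    (hδ : 0 < δ) (hη : 0 ≤ η)
    (Λb : X →L[ℝ] StrongDual ℝ X)
    (hΛbM : ∀ u : X, Λb u u ≤ (1 - η) * M u u)
    (ε : ℕ → ℝ) (p pbar : ℝ) (hp1 : 1 ≤ p) (hppbar : p ≤ pbar)
    (halt :
      (pbar = 1 + 2 * γ ∧
        ∀ k : ℕ, (∀ n ≤ k, Real.sqrt (M (x n - xb) (x n - xb)) < δ) →
          γ * M (x (k + 1) - xb) (x (k + 1) - xb)
              - (1 / 2) * Λb (x (k + 1) - x k) (x (k + 1) - x k) - ε k
            ≤ (-(M (x (k + 1) - x k))) (x (k + 1) - xb))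
      ∨
      (pbar = 1 + γ ∧
        ∃ gap : X → EReal, (∀ u : X, 0 ≤ gap u) ∧
          ∀ k : ℕ, (∀ n ≤ k, Real.sqrt (M (x n - xb) (x n - xb)) < δ) →
            gap (x (k + 1))
                + (((γ / 2) * M (x (k + 1) - xb) (x (k + 1) - xb)
                    - (1 / 2) * Λb (x (k + 1) - x k) (x (k + 1) - x k) - ε k : ℝ) : EReal)
              ≤ (((-(M (x (k + 1) - x k))) (x (k + 1) - xb) : ℝ) : EReal)))
    (rp : ℝ)
    (hrp : ∀ N : ℕ, ∑ k ∈ Finset.range N, p ^ k / p ^ N * ε k ≤ rp)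
    (hx0 : Real.sqrt (M (x 0 - xb) (x 0 - xb)) < Real.sqrt (δ ^ 2 - 2 * rp)) :
    (∀ k : ℕ, Real.sqrt (M (x k - xb) (x k - xb)) < δ)
    ∧ (∀ k : ℕ,
        p / 2 * M (x (k + 1) - xb) (x (k + 1) - xb)
          ≤ 1 / 2 * M (x k - xb) (x k - xb) + ε k)
    ∧ (0 < η → ∃ C : ℝ, ∀ N : ℕ,
        ∑ k ∈ Finset.range N, p ^ k / p ^ N * M (x (k + 1) - x k) (x (k + 1) - x k) ≤ C) := by
  obtain ⟨c, hpbar, hineq⟩ : ∃ c, pbar = 1 + 2 * c ∧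
      ∀ k : ℕ, (∀ n ≤ k, Real.sqrt (M (x n - xb) (x n - xb)) < δ) →
        c * M (x (k + 1) - xb) (x (k + 1) - xb)
            - (1 / 2) * Λb (x (k + 1) - x k) (x (k + 1) - x k) - ε k
          ≤ (-(M (x (k + 1) - x k))) (x (k + 1) - xb) := by
    rcases halt with ⟨hpbar, hA⟩ | ⟨hpbar, gap, hgap, hB⟩
    · exact ⟨γ, hpbar, hA⟩
    · exact ⟨γ / 2, by rw [hpbar]; ring, fun k hk =>
        EReal.le_of_nonneg_add_coe_le_coe (hgap _) (hB k hk)⟩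
  have hstep : ∀ k : ℕ, (∀ n ≤ k, M (x n - xb) (x n - xb) < δ ^ 2) →
      p * M (x (k + 1) - xb) (x (k + 1) - xb) + η * M (x (k + 1) - x k) (x (k + 1) - x k)
        ≤ M (x k - xb) (x k - xb) + 2 * ε k := by
    intro k hk
    have h := hineq k fun n hn => (Real.sqrt_lt' hδ).2 (hk n hn)
    rw [neg_apply] at h
    have h3 := two_mul_apply_sub_sub M hMsa (x (k + 1)) (x k) xb
    rw [hpbar] at hppbar
    nlinarith [hΛbM (x (k + 1) - x k), mul_nonneg (sub_nonneg.2 hppbar) (hMpsd (x (k + 1) - xb))]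
  have ha0 := (Real.sqrt_lt_sqrt_iff (hMpsd _)).1 hx0
  have hball := forall_lt_of_local_descent hp1 hη (fun _ => hMpsd _) (hMpsd _) hrp
    (by linarith) hstep
  have hdescent := fun k => hstep k fun n _ => hball n
  refine ⟨fun k => (Real.sqrt_lt' hδ).2 (hball k), fun k => ?_, fun hη0 =>
    exists_sum_pow_div_pow_mul_le (a := fun k => M (x k - xb) (x k - xb)) hp1 hη0
      (fun _ => hMpsd _) hrp hdescent⟩
  linarith [hdescent k, mul_nonneg hη (hMpsd (x (k + 1) - x k))]

theorem stmt14 {X : Type*} [NormedAddCommGroup X] [NormedSpace ℝ X]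
    (M : X →L[ℝ] StrongDual ℝ X)
    (hMsa : ∀ u v : X, M u v = M v u) (hMpsd : ∀ u : X, 0 ≤ M u u)
    (x : ℕ → X) (xb : X) (δ γ η : ℝ)
    (hδ : 0 < δ) (hγ : 0 ≤ γ) (hη : 0 ≤ η)
    (Λb : X →L[ℝ] StrongDual ℝ X)
    (hΛbsa : ∀ u v : X, Λb u v = Λb v u)
    (hΛbpsd : ∀ u : X, 0 ≤ Λb u u)
    (hΛbM : ∀ u : X, Λb u u ≤ (1 - η) * M u u)
    (ε : ℕ → ℝ) (p pbar : ℝ) (hp1 : 1 ≤ p) (hppbar : p ≤ pbar)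
    (halt :
      (pbar = 1 + 2 * γ ∧
        ∀ k : ℕ, (∀ n ≤ k, Real.sqrt (M (x n - xb) (x n - xb)) < δ) →
          γ * M (x (k + 1) - xb) (x (k + 1) - xb)
              - (1 / 2) * Λb (x (k + 1) - x k) (x (k + 1) - x k) - ε k
            ≤ (-(M (x (k + 1) - x k))) (x (k + 1) - xb))
      ∨
      (pbar = 1 + γ ∧
        ∃ gap : X → EReal, (∀ u : X, 0 ≤ gap u) ∧
          ∀ k : ℕ, (∀ n ≤ k, Real.sqrt (M (x n - xb) (x n - xb)) < δ) →
            gap (x (k + 1))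
                + (((γ / 2) * M (x (k + 1) - xb) (x (k + 1) - xb)
                    - (1 / 2) * Λb (x (k + 1) - x k) (x (k + 1) - x k) - ε k : ℝ) : EReal)
              ≤ (((-(M (x (k + 1) - x k))) (x (k + 1) - xb) : ℝ) : EReal)))
    (rp : ℝ)
    (hrp : ∀ N : ℕ, ∑ k ∈ Finset.range N, p ^ k / p ^ N * ε k ≤ rp)
    (hrpδ : rp < δ ^ 2 / 2)
    (hx0 : Real.sqrt (M (x 0 - xb) (x 0 - xb)) < Real.sqrt (δ ^ 2 - 2 * rp)) :
    (∀ k : ℕ, Real.sqrt (M (x k - xb) (x k - xb)) < δ)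
    ∧ (∀ k : ℕ,
        p / 2 * M (x (k + 1) - xb) (x (k + 1) - xb)
          ≤ 1 / 2 * M (x k - xb) (x k - xb) + ε k)
    ∧ (0 < η → ∃ C : ℝ, ∀ N : ℕ,
        ∑ k ∈ Finset.range N, p ^ k / p ^ N * M (x (k + 1) - x k) (x (k + 1) - x k) ≤ C) :=
  stmt14_general M hMsa hMpsd x xb δ γ η hδ hη Λb hΛbM ε p pbar hp1 hppbar halt rp hrp hx0
end

section
/- Let X be a real normed space, M : X → X* bounded linear, self-adjoint and positive semi-definite, and (x^k)_{k≥0} ⊂ X with v^{k+1} := −M(x^{k+1} − x^k). Let x̄ ∈ X, δ > 0, γ ≥ 0, η ≥ 0, Λ̆ self-adjoint with 0 ≤ Λ̆ ≤ (1−η)M, (ε_k) ⊂ ℝ and p ∈ (1, 1+2γ]. Suppose that whenever x^0, …, x^k ∈ 𝔒_M(x̄, δ), ⟨v^{k+1}, x^{k+1} − x̄⟩ ≥ γ ‖x^{k+1} − x̄‖_M² − (1/2)‖x^{k+1} − x^k‖_{Λ̆}² − ε_k; that s := sup_{N∈ℕ} Σ_{k=0}^{N−1} p^k ε_k satisfies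 s < δ²/2; and that x^0 ∈ 𝔒_M(x̄, √(δ² − 2s)). Then for every N ≥ 0: p^N ‖x^N − x̄‖_M² ≤ ‖x^0 − x̄‖_M² + 2s; in particular ‖x^N − x̄‖_M² → 0 at the linear rate O(p^{−N}). -/
/-!
Write `a n := ‖x n - x̄‖²_M`. The three-point identity
`2 ⟨M (u - w), u⟩ = ‖u‖²_M - ‖w‖²_M + ‖u - w‖²_M`, together with `Λ̆ ≤ M`, turns the descent
inequality into the one-step contraction `p a (k + 1) ≤ a k + 2 ε k`, valid as long as the
iterates stay in the ball `a < δ²`. Unrolling it gives `p ^ N a N ≤ a 0 + 2 s`, and since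
`a 0 + 2 s < δ²` and `p ≥ 1` this bound itself keeps the next iterate in the ball, so by strong
induction the contraction holds at every step.
-/

open Filter Topology Finset

section SymmetricForm

variable {X : Type*} [NormedAddCommGroup X] [NormedSpace ℝ X] (M : X →L[ℝ] StrongDual ℝ X)

theorem two_mul_apply_sub_self_eq (hM : ∀ u v : X, M u v = M v u) (u w : X) :
    2 * M (u - w) u = M u u - M w w + M (u - w) (u - w) := by
  simp only [map_sub, sub_apply, hM w u]
  ring

theorem one_add_two_mul_le_of_descent (hM : ∀ u v : X, M u v = M v u)
    {Λ : X →L[ℝ] StrongDual ℝ X} (hΛM : ∀ u : X, Λ u u ≤ M u u) {γ ε : ℝ} {u w : X}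
    (h : γ * M u u - 1 / 2 * Λ (u - w) (u - w) - ε ≤ (-M (u - w)) u) :
    (1 + 2 * γ) * M u u ≤ M w w + 2 * ε := by
  have := two_mul_apply_sub_self_eq M hM u w
  rw [neg_apply] at h
  linarith [hΛM (u - w)]

end SymmetricForm

section LocalContraction

variable {a ε : ℕ → ℝ} {p : ℝ}

theorem pow_mul_le_add_sum_of_contraction (hp : 0 ≤ p) {N : ℕ}
    (hstep : ∀ k < N, p * a (k + 1) ≤ a k + 2 * ε k) :
    p ^ N * a N ≤ a 0 + 2 * ∑ k ∈ range N, p ^ k * ε k := by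
  induction N with
  | zero => simp
  | succ N ih =>
    have hprev := ih fun k hk => hstep k (hk.trans N.lt_succ_self)
    have hlast := mul_le_mul_of_nonneg_left (hstep N N.lt_succ_self) (pow_nonneg hp N)
    rw [sum_range_succ, pow_succ]
    linarith

theorem forall_lt_of_local_contraction (hp : 1 ≤ p) (ha : ∀ n, 0 ≤ a n) {r s : ℝ}
    (hstep : ∀ k, (∀ n ≤ k, a n < r) → p * a (k + 1) ≤ a k + 2 * ε k)
    (hs : ∀ N, ∑ k ∈ range N, p ^ k * ε k ≤ s) (h0 : a 0 + 2 * s < r) (n : ℕ) : a n < r := by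
  induction n using Nat.strong_induction_on with
  | _ n ih =>
    have hbound := pow_mul_le_add_sum_of_contraction (zero_le_one.trans hp)
      fun k hk => hstep k fun m hm => ih m (hm.trans_lt hk)
    have hle : a n ≤ p ^ n * a n := le_mul_of_one_le_left (ha n) (one_le_pow₀ hp)
    linarith [hs n]

theorem tendsto_zero_of_pow_mul_le (hp : 1 < p) (ha : ∀ n, 0 ≤ a n) {C : ℝ}
    (hC : ∀ n, p ^ n * a n ≤ C) : Tendsto a atTop (𝓝 0) := by
  have hp0 : 0 < p := zero_lt_one.trans hp
  have hgeom : Tendsto (fun n => C * p⁻¹ ^ n) atTop (𝓝 0) := by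
    simpa using (tendsto_pow_atTop_nhds_zero_of_lt_one (inv_nonneg.2 hp0.le)
      (inv_lt_one_of_one_lt₀ hp)).const_mul C
  refine squeeze_zero ha (fun n => ?_) hgeom
  rw [inv_pow, ← div_eq_mul_inv, le_div_iff₀ (pow_pos hp0 n), mul_comm]
  exact hC n

end LocalContraction

theorem stmt15_general {X : Type*} [NormedAddCommGroup X] [NormedSpace ℝ X]
    (M : X →L[ℝ] StrongDual ℝ X)
    (hMsa : ∀ u v : X, M u v = M v u) (hMpsd : ∀ u : X, 0 ≤ M u u)
    (x : ℕ → X) (xb : X) (δ γ η : ℝ)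
    (hδ : 0 < δ) (hη : 0 ≤ η)
    (Λb : X →L[ℝ] StrongDual ℝ X)
    (hΛbM : ∀ u : X, Λb u u ≤ (1 - η) * M u u)
    (ε : ℕ → ℝ) (p : ℝ) (hp1 : 1 < p) (hpγ : p ≤ 1 + 2 * γ)
    (hdesc : ∀ k : ℕ, (∀ n ≤ k, Real.sqrt (M (x n - xb) (x n - xb)) < δ) →
      γ * M (x (k + 1) - xb) (x (k + 1) - xb)
          - (1 / 2) * Λb (x (k + 1) - x k) (x (k + 1) - x k) - ε k
        ≤ (-(M (x (k + 1) - x k))) (x (k + 1) - xb))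
    (s : ℝ)
    (hs : ∀ N : ℕ, ∑ k ∈ Finset.range N, p ^ k * ε k ≤ s)
    (hx0 : Real.sqrt (M (x 0 - xb) (x 0 - xb)) < Real.sqrt (δ ^ 2 - 2 * s)) :
    (∀ N : ℕ, p ^ N * M (x N - xb) (x N - xb) ≤ M (x 0 - xb) (x 0 - xb) + 2 * s)
    ∧ Tendsto (fun N : ℕ => M (x N - xb) (x N - xb)) atTop (nhds 0) := by
  set a : ℕ → ℝ := fun n => M (x n - xb) (x n - xb)
  have ha : ∀ n, 0 ≤ a n := fun n => hMpsd _
  have hΛM : ∀ u, Λb u u ≤ M u u := fun u => by nlinarith [hΛbM u, hMpsd u]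
  have hstep : ∀ k, (∀ n ≤ k, a n < δ ^ 2) → p * a (k + 1) ≤ a k + 2 * ε k := fun k hk => by
    have h := hdesc k fun n hn => (Real.sqrt_lt' hδ).2 (hk n hn)
    rw [← sub_sub_sub_cancel_right (x (k + 1)) (x k) xb] at h
    calc p * a (k + 1) ≤ (1 + 2 * γ) * a (k + 1) := mul_le_mul_of_nonneg_right hpγ (ha _)
      _ ≤ a k + 2 * ε k := one_add_two_mul_le_of_descent M hMsa hΛM h
  have h0 : a 0 + 2 * s < δ ^ 2 := by linarith [(Real.sqrt_lt_sqrt_iff (ha 0)).1 hx0]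
  have hbound : ∀ N, p ^ N * a N ≤ a 0 + 2 * s := fun N => by
    have := pow_mul_le_add_sum_of_contraction (N := N) (zero_le_one.trans hp1.le) fun k _ =>
      hstep k fun n _ => forall_lt_of_local_contraction hp1.le ha hstep hs h0 n
    linarith [hs N]
  exact ⟨hbound, tendsto_zero_of_pow_mul_le hp1 ha hbound⟩

theorem stmt15 {X : Type*} [NormedAddCommGroup X] [NormedSpace ℝ X]
    (M : X →L[ℝ] StrongDual ℝ X)
    (hMsa : ∀ u v : X, M u v = M v u) (hMpsd : ∀ u : X, 0 ≤ M u u)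
    (x : ℕ → X) (xb : X) (δ γ η : ℝ)
    (hδ : 0 < δ) (hγ : 0 ≤ γ) (hη : 0 ≤ η)
    (Λb : X →L[ℝ] StrongDual ℝ X)
    (hΛbsa : ∀ u v : X, Λb u v = Λb v u)
    (hΛbpsd : ∀ u : X, 0 ≤ Λb u u)
    (hΛbM : ∀ u : X, Λb u u ≤ (1 - η) * M u u)
    (ε : ℕ → ℝ) (p : ℝ) (hp1 : 1 < p) (hpγ : p ≤ 1 + 2 * γ)
    (hdesc : ∀ k : ℕ, (∀ n ≤ k, Real.sqrt (M (x n - xb) (x n - xb)) < δ) →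
      γ * M (x (k + 1) - xb) (x (k + 1) - xb)
          - (1 / 2) * Λb (x (k + 1) - x k) (x (k + 1) - x k) - ε k
        ≤ (-(M (x (k + 1) - x k))) (x (k + 1) - xb))
    (s : ℝ)
    (hs : ∀ N : ℕ, ∑ k ∈ Finset.range N, p ^ k * ε k ≤ s)
    (hsδ : s < δ ^ 2 / 2)
    (hx0 : Real.sqrt (M (x 0 - xb) (x 0 - xb)) < Real.sqrt (δ ^ 2 - 2 * s)) :
    (∀ N : ℕ, p ^ N * M (x N - xb) (x N - xb) ≤ M (x 0 - xb) (x 0 - xb) + 2 * s)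
    ∧ Tendsto (fun N : ℕ => M (x N - xb) (x N - xb)) atTop (nhds 0) :=
  stmt15_general M hMsa hMpsd x xb δ γ η hδ hη Λb hΛbM ε p hp1 hpγ hdesc s hs hx0
end

section
/- Let X be a real normed space, M : X → X* bounded linear, self-adjoint and positive semi-definite, (x^k)_{k≥0} ⊂ X with v^{k+1} := −M(x^{k+1} − x^k), and let 𝒢 be the Lagrangian gap of F : X → ℝ, proper G : X → ℝ ∪ {+∞} and skew-adjoint Ξ. Suppose (non-escape at x̄): x̄ ∈ X, δ > 0, γ ≥ 0, Λ̆ self-adjoint with 0 ≤ Λ̆ ≤ M, (ε_k) ⊂ ℝ with r := sup_N Σ_{k<N} ε_k < δ²/2, x^0 ∈ 𝔒_M(x̄, √(δ² − 2r)), and whenever x^0, …, x^k ∈ 𝔒_M(x̄, δ): ⟨v^{k+1}, x^{k+1} − x̄⟩ ≥ γ ‖x^{k+1} − x̄‖_M² − (1/2)‖x^{k+1} − x^k‖_{Λ̆}² − ε_k. Suppose further that x̂ ∈ X, γ̂ ≥ 0, Λ̂ self-adjoint with 0 ≤ Λ̂ ≤ M, and (ε̂_k) ⊂ ℝ are such that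 whenever x^0, …, x^k ∈ 𝔒_M(x̄, δ): ⟨v^{k+1}, x^{k+1} − x̂⟩ ≥ 𝒢(x^{k+1}; x̂) + (γ̂/2)‖x^{k+1} − x̂‖_M² − (1/2)‖x^{k+1} − x^k‖_{Λ̂}² − ε̂_k. Then for every N ≥ 1: Σ_{k=0}^{N−1} 𝒢(x^{k+1}; x̂) + (1/2)‖x^N − x̂‖_M² ≤ (1/2)‖x^0 − x̂‖_M² + Σ_{k=0}^{N−1} ε̂_k. -/
/-!
Writing `φ k := ½‖x^k − u‖²_M`, the three-point identity
`⟨−M(x^{k+1} − x^k), x^{k+1} − u⟩ = φ_k − φ_{k+1} − ½‖x^{k+1} − x^k‖²_M` together with `Λ ≤ M`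
turns each descent inequality at `u` into `φ_{k+1} ≤ φ_k + ε_k` (plus the gap term at `x̂`).
At `u = x̄` these bounds sum to `φ_n ≤ φ_0 + r < δ²/2`, so by induction the iterates never leave
`𝔒_M(x̄, δ)`; the gap inequality at `x̂` therefore holds at every step, and it telescopes.
-/

open Finset

lemma neg_apply_sub_apply_sub {X : Type*} [NormedAddCommGroup X] [NormedSpace ℝ X]
    (M : X →L[ℝ] StrongDual ℝ X) (hM : ∀ u v : X, M u v = M v u) (a b c : X) :
    (-(M (a - b))) (a - c)
      = 1 / 2 * M (b - c) (b - c) - 1 / 2 * M (a - c) (a - c) - 1 / 2 * M (a - b) (a - b) := by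
  simp only [map_sub, sub_apply, neg_apply]
  linarith [hM a b, hM a c, hM b c]

lemma neg_apply_sub_sub_add_half_le {X : Type*} [NormedAddCommGroup X] [NormedSpace ℝ X]
    (M Λ : X →L[ℝ] StrongDual ℝ X) (hM : ∀ u v : X, M u v = M v u)
    (hMpsd : ∀ u : X, 0 ≤ M u u) (hΛM : ∀ u : X, Λ u u ≤ M u u)
    {γ : ℝ} (hγ : 0 ≤ γ) (a b c : X) (e : ℝ) :
    (-(M (a - b))) (a - c) - (γ * M (a - c) (a - c) - 1 / 2 * Λ (a - b) (a - b) - e)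
        + 1 / 2 * M (a - c) (a - c)
      ≤ 1 / 2 * M (b - c) (b - c) + e := by
  rw [neg_apply_sub_apply_sub M hM]
  linarith [hΛM (a - b), mul_nonneg hγ (hMpsd (a - c))]

lemma forall_lt_of_add_le_of_sum_le {d ε : ℕ → ℝ} {r B : ℝ}
    (hr : ∀ N, ∑ k ∈ range N, ε k ≤ r) (h0 : d 0 + r < B)
    (hstep : ∀ k, (∀ n ≤ k, d n < B) → d (k + 1) ≤ d k + ε k) :
    ∀ n, d n < B := by
  have hsum : ∀ n, d n ≤ d 0 + ∑ k ∈ range n, ε k := by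
    intro n
    induction n using Nat.strong_induction_on with
    | _ n ih =>
      cases n with
      | zero => simp
      | succ k =>
        have hlt : ∀ n ≤ k, d n < B := fun n hn =>
          ((ih n (Nat.lt_succ_of_le hn)).trans_lt (by linarith [hr n]))
        rw [sum_range_succ]
        linarith [hstep k hlt, ih k k.lt_succ_self]
  exact fun n => (hsum n).trans_lt (by linarith [hr n])

lemma EReal.add_le_of_add_le_of_sub_add_le {z : EReal} {s t p q : ℝ}
    (h : z + t ≤ s) (hq : s - t + p ≤ q) : z + p ≤ q := by
  have hz : z ≤ ((s - t : ℝ) : EReal) := by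
    rw [EReal.coe_sub, EReal.le_sub_iff_add_le (.inl (EReal.coe_ne_bot t))
      (.inl (EReal.coe_ne_top t))]
    exact h
  calc z + p ≤ ((s - t : ℝ) : EReal) + p := add_le_add_left hz _
    _ = ((s - t + p : ℝ) : EReal) := rfl
    _ ≤ q := EReal.coe_le_coe_iff.mpr hq

lemma EReal.sum_range_add_le_of_add_le {g : ℕ → EReal} {φ e : ℕ → ℝ}
    (h : ∀ k, g k + φ (k + 1) ≤ ((φ k + e k : ℝ) : EReal)) (N : ℕ) :
    (∑ k ∈ range N, g k) + φ N ≤ ((φ 0 + ∑ k ∈ range N, e k : ℝ) : EReal) := by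
  induction N with
  | zero => simp
  | succ N ih =>
    calc (∑ k ∈ range (N + 1), g k) + φ (N + 1)
        = (∑ k ∈ range N, g k) + (g N + φ (N + 1)) := by rw [sum_range_succ, add_assoc]
      _ ≤ (∑ k ∈ range N, g k) + ((φ N + e N : ℝ) : EReal) := add_le_add_right (h N) _
      _ = ((∑ k ∈ range N, g k) + φ N) + e N := by rw [EReal.coe_add, add_assoc]
      _ ≤ ((φ 0 + ∑ k ∈ range N, e k : ℝ) : EReal) + e N := add_le_add_left ih _
      _ = ((φ 0 + ∑ k ∈ range (N + 1), e k : ℝ) : EReal) := by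
        rw [sum_range_succ, ← EReal.coe_add, add_assoc]

theorem stmt16_general {X : Type*} [NormedAddCommGroup X] [NormedSpace ℝ X]
    (M : X →L[ℝ] StrongDual ℝ X)
    (hMsa : ∀ u v : X, M u v = M v u) (hMpsd : ∀ u : X, 0 ≤ M u u)
    (x : ℕ → X)
    (gap : X → X → EReal)
    -- non-escape hypotheses at x̄
    (xb : X) (δ γ : ℝ) (hδ : 0 < δ) (hγ : 0 ≤ γ)
    (Λb : X →L[ℝ] StrongDual ℝ X)
    (hΛbM : ∀ u : X, Λb u u ≤ M u u)
    (ε : ℕ → ℝ) (r : ℝ)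
    (hr : ∀ N : ℕ, ∑ k ∈ Finset.range N, ε k ≤ r)
    (hx0 : Real.sqrt (M (x 0 - xb) (x 0 - xb)) < Real.sqrt (δ ^ 2 - 2 * r))
    (hdesc : ∀ k : ℕ, (∀ n ≤ k, Real.sqrt (M (x n - xb) (x n - xb)) < δ) →
      γ * M (x (k + 1) - xb) (x (k + 1) - xb)
          - (1 / 2) * Λb (x (k + 1) - x k) (x (k + 1) - x k) - ε k
        ≤ (-(M (x (k + 1) - x k))) (x (k + 1) - xb))
    -- gap inequality at x̂
    (xh : X) (γh : ℝ) (hγh : 0 ≤ γh)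
    (Λh : X →L[ℝ] StrongDual ℝ X)
    (hΛhM : ∀ u : X, Λh u u ≤ M u u)
    (εh : ℕ → ℝ)
    (hgapdesc : ∀ k : ℕ, (∀ n ≤ k, Real.sqrt (M (x n - xb) (x n - xb)) < δ) →
      gap (x (k + 1)) xh
          + (((γh / 2) * M (x (k + 1) - xh) (x (k + 1) - xh)
              - (1 / 2) * Λh (x (k + 1) - x k) (x (k + 1) - x k) - εh k : ℝ) : EReal)
        ≤ (((-(M (x (k + 1) - x k))) (x (k + 1) - xh) : ℝ) : EReal)) :
    ∀ N : ℕ, 1 ≤ N →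
      (∑ k ∈ Finset.range N, gap (x (k + 1)) xh)
          + (((1 / 2) * M (x N - xh) (x N - xh) : ℝ) : EReal)
        ≤ (((1 / 2) * M (x 0 - xh) (x 0 - xh) + ∑ k ∈ Finset.range N, εh k : ℝ) : EReal) := by
  have sqrt_lt_iff : ∀ u, Real.sqrt (M u u) < δ ↔ 1 / 2 * M u u < δ ^ 2 / 2 := fun u => by
    rw [Real.sqrt_lt' hδ]
    constructor <;> intro <;> linarith
  have hx0' : M (x 0 - xb) (x 0 - xb) < δ ^ 2 - 2 * r :=
    (Real.sqrt_lt_sqrt_iff (hMpsd _)).mp hx0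
  have hball : ∀ n, Real.sqrt (M (x n - xb) (x n - xb)) < δ := by
    refine fun n => (sqrt_lt_iff _).mpr (forall_lt_of_add_le_of_sum_le
      (d := fun n => 1 / 2 * M (x n - xb) (x n - xb)) hr (by linarith) (fun k hk => ?_) n)
    linarith [hdesc k fun n hn => (sqrt_lt_iff _).mpr (hk n hn),
      neg_apply_sub_sub_add_half_le M Λb hMsa hMpsd hΛbM hγ (x (k + 1)) (x k) xb (ε k)]
  intro N _
  refine EReal.sum_range_add_le_of_add_le
    (φ := fun n => 1 / 2 * M (x n - xh) (x n - xh)) (fun k => ?_) N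
  exact EReal.add_le_of_add_le_of_sub_add_le (hgapdesc k fun n _ => hball n)
    (neg_apply_sub_sub_add_half_le M Λh hMsa hMpsd hΛhM (by positivity) (x (k + 1)) (x k) xh _)

theorem stmt16 {X : Type*} [NormedAddCommGroup X] [NormedSpace ℝ X]
    (M : X →L[ℝ] StrongDual ℝ X)
    (hMsa : ∀ u v : X, M u v = M v u) (hMpsd : ∀ u : X, 0 ≤ M u u)
    (x : ℕ → X)
    (F : X → ℝ) (G : X → EReal)
    (hGproper : (∃ u, G u ≠ ⊤) ∧ ∀ u, G u ≠ ⊥)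
    (Ξ : X →L[ℝ] StrongDual ℝ X)
    (hΞskew : ∀ u v : X, Ξ u v = -(Ξ v u))
    (gap : X → X → EReal)
    (hgap : ∀ u v : X,
      gap u v = ((F u : EReal) + G u) - ((F v : EReal) + G v) - ((Ξ u v : ℝ) : EReal))
    -- non-escape hypotheses at x̄
    (xb : X) (δ γ : ℝ) (hδ : 0 < δ) (hγ : 0 ≤ γ)
    (Λb : X →L[ℝ] StrongDual ℝ X)
    (hΛbsa : ∀ u v : X, Λb u v = Λb v u)
    (hΛbpsd : ∀ u : X, 0 ≤ Λb u u)
    (hΛbM : ∀ u : X, Λb u u ≤ M u u)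
    (ε : ℕ → ℝ) (r : ℝ)
    (hr : ∀ N : ℕ, ∑ k ∈ Finset.range N, ε k ≤ r)
    (hrδ : r < δ ^ 2 / 2)
    (hx0 : Real.sqrt (M (x 0 - xb) (x 0 - xb)) < Real.sqrt (δ ^ 2 - 2 * r))
    (hdesc : ∀ k : ℕ, (∀ n ≤ k, Real.sqrt (M (x n - xb) (x n - xb)) < δ) →
      γ * M (x (k + 1) - xb) (x (k + 1) - xb)
          - (1 / 2) * Λb (x (k + 1) - x k) (x (k + 1) - x k) - ε k
        ≤ (-(M (x (k + 1) - x k))) (x (k + 1) - xb))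
    -- gap inequality at x̂
    (xh : X) (γh : ℝ) (hγh : 0 ≤ γh)
    (Λh : X →L[ℝ] StrongDual ℝ X)
    (hΛhsa : ∀ u v : X, Λh u v = Λh v u)
    (hΛhpsd : ∀ u : X, 0 ≤ Λh u u)
    (hΛhM : ∀ u : X, Λh u u ≤ M u u)
    (εh : ℕ → ℝ)
    (hgapdesc : ∀ k : ℕ, (∀ n ≤ k, Real.sqrt (M (x n - xb) (x n - xb)) < δ) →
      gap (x (k + 1)) xh
          + (((γh / 2) * M (x (k + 1) - xh) (x (k + 1) - xh)
              - (1 / 2) * Λh (x (k + 1) - x k) (x (k + 1) - x k) - εh k : ℝ) : EReal)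
        ≤ (((-(M (x (k + 1) - x k))) (x (k + 1) - xh) : ℝ) : EReal)) :
    ∀ N : ℕ, 1 ≤ N →
      (∑ k ∈ Finset.range N, gap (x (k + 1)) xh)
          + (((1 / 2) * M (x N - xh) (x N - xh) : ℝ) : EReal)
        ≤ (((1 / 2) * M (x 0 - xh) (x 0 - xh) + ∑ k ∈ Finset.range N, εh k : ℝ) : EReal) :=
  stmt16_general M hMsa hMpsd x gap xb δ γ hδ hγ Λb hΛbM ε r hr hx0 hdesc xh γh hγh Λh hΛhM εh
    hgapdesc
end

section
/- Let (a_k), (b_k), (c_k), (d_k) be nonnegative real sequences satisfying a_{k+1} ≤ a_k(1 + b_k) + c_k − d_k for all k ≥ 0. If Σ_{k=0}^{∞} b_k < ∞ and Σ_{k=0}^{∞} c_k < ∞, then (i) lim_{k→∞} a_k exists and is finite, and (ii) Σ_{k=0}^{∞} d_k < ∞. -/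
open Filter

theorem stmt18 (a b c d : ℕ → ℝ)
    (ha : ∀ k, 0 ≤ a k) (hb : ∀ k, 0 ≤ b k) (hc : ∀ k, 0 ≤ c k) (hd : ∀ k, 0 ≤ d k)
    (hrec : ∀ k : ℕ, a (k + 1) ≤ a k * (1 + b k) + c k - d k)
    (hsb : Summable b) (hsc : Summable c) :
    (∃ L : ℝ, Tendsto a atTop (nhds L)) ∧ Summable d := by
  set P : ℕ → ℝ := fun k => ∏ j ∈ Finset.range k, (1 + b j) with hPdef
  have hPsucc : ∀ k, P (k + 1) = P k * (1 + b k) := fun k => Finset.prod_range_succ _ _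
  have hP1 : ∀ k, 1 ≤ P k := by
    intro k
    induction k with
    | zero => simp [hPdef]
    | succ n ih => rw [hPsucc n]; nlinarith [hb n]
  have hPpos : ∀ k, 0 < P k := fun k => lt_of_lt_of_le one_pos (hP1 k)
  have hPmono : Monotone P := monotone_nat_of_le_succ fun k => by
    rw [hPsucc k]; nlinarith [hPpos k, hb k]
  have hPle : ∀ k, P k ≤ Real.exp (∑' j, b j) := by
    intro k
    calc P k ≤ ∏ j ∈ Finset.range k, Real.exp (b j) :=
          Finset.prod_le_prod (fun j _ => by linarith [hb j])
            (fun j _ => by linarith [Real.add_one_le_exp (b j)])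
      _ = Real.exp (∑ j ∈ Finset.range k, b j) := (Real.exp_sum _ _).symm
      _ ≤ Real.exp (∑' j, b j) :=
          Real.exp_le_exp.mpr (Summable.sum_le_tsum _ (fun j _ => hb j) hsb)
  have hPtend : Tendsto P atTop (nhds (⨆ k, P k)) :=
    tendsto_atTop_ciSup hPmono
      ⟨Real.exp (∑' j, b j), fun x hx => by obtain ⟨k, rfl⟩ := hx; exact hPle k⟩
  set A : ℕ → ℝ := fun k => a k / P k with hAdef
  set C : ℕ → ℝ := fun k => c k / P (k + 1) with hCdef
  set D : ℕ → ℝ := fun k => d k / P (k + 1) with hDdef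
  have hAnn : ∀ k, 0 ≤ A k := fun k => div_nonneg (ha k) (hPpos k).le
  have hCnn : ∀ k, 0 ≤ C k := fun k => div_nonneg (hc k) (hPpos _).le
  have hDnn : ∀ k, 0 ≤ D k := fun k => div_nonneg (hd k) (hPpos _).le
  have hrec' : ∀ k, A (k + 1) ≤ A k + C k - D k := by
    intro k
    have hbk : (0:ℝ) < 1 + b k := by linarith [hb k]
    have h1 : a (k + 1) / P (k + 1) ≤ (a k * (1 + b k) + c k - d k) / P (k + 1) := by
      gcongr
      · exact (hPpos _).le
      · exact hrec k
    have h2 : (a k * (1 + b k) + c k - d k) / P (k + 1) = A k + C k - D k := by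
      simp only [hAdef, hCdef, hDdef, hPsucc k]
      have h3 : P k ≠ 0 := (hPpos k).ne'
      field_simp
    calc A (k + 1) = a (k + 1) / P (k + 1) := rfl
      _ ≤ (a k * (1 + b k) + c k - d k) / P (k + 1) := h1
      _ = A k + C k - D k := h2
  have hsC : Summable C :=
    Summable.of_nonneg_of_le hCnn (fun k => div_le_self (hc k) (hP1 _)) hsc
  set V : ℕ → ℝ :=
    fun k => A k + (∑ j ∈ Finset.range k, D j) - (∑ j ∈ Finset.range k, C j) with hVdef
  have hVanti : Antitone V := antitone_nat_of_succ_le fun k => by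
    simp only [hVdef, Finset.sum_range_succ]
    linarith [hrec' k]
  have hVlb : ∀ k, -(∑' j, C j) ≤ V k := by
    intro k
    have h1 : ∑ j ∈ Finset.range k, C j ≤ ∑' j, C j :=
      Summable.sum_le_tsum _ (fun j _ => hCnn j) hsC
    have h3 : 0 ≤ ∑ j ∈ Finset.range k, D j := Finset.sum_nonneg fun j _ => hDnn j
    simp only [hVdef]
    linarith [hAnn k]
  have hVtend : Tendsto V atTop (nhds (⨅ k, V k)) :=
    tendsto_atTop_ciInf hVanti
      ⟨-(∑' j, C j), fun x hx => by obtain ⟨k, rfl⟩ := hx; exact hVlb k⟩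
  have hSDle : ∀ n, ∑ j ∈ Finset.range n, D j ≤ V 0 + ∑' j, C j := by
    intro n
    have h0 : V n ≤ V 0 := hVanti (Nat.zero_le n)
    have h1 : ∑ j ∈ Finset.range n, C j ≤ ∑' j, C j :=
      Summable.sum_le_tsum _ (fun j _ => hCnn j) hsC
    have h2 : V n = A n + (∑ j ∈ Finset.range n, D j) - (∑ j ∈ Finset.range n, C j) := rfl
    linarith [hAnn n]
  have hsD : Summable D := summable_of_sum_range_le hDnn hSDle
  have hsd : Summable d := by
    refine Summable.of_nonneg_of_le hd (fun k => ?_) (hsD.mul_right (Real.exp (∑' j, b j)))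
    have hk : d k = D k * P (k + 1) := (div_mul_cancel₀ _ (hPpos (k + 1)).ne').symm
    rw [hk]
    exact mul_le_mul_of_nonneg_left (hPle (k + 1)) (hDnn k)
  have hSDt : Tendsto (fun n => ∑ j ∈ Finset.range n, D j) atTop (nhds (∑' j, D j)) :=
    hsD.hasSum.tendsto_sum_nat
  have hSCt : Tendsto (fun n => ∑ j ∈ Finset.range n, C j) atTop (nhds (∑' j, C j)) :=
    hsC.hasSum.tendsto_sum_nat
  have hAt : Tendsto A atTop (nhds ((⨅ k, V k) - (∑' j, D j) + ∑' j, C j)) := by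
    have h := (hVtend.sub hSDt).add hSCt
    refine h.congr fun k => ?_
    simp only [hVdef]
    ring
  refine ⟨⟨((⨅ k, V k) - (∑' j, D j) + ∑' j, C j) * (⨆ k, P k), ?_⟩, hsd⟩
  have hak : ∀ k, A k * P k = a k := fun k => div_mul_cancel₀ _ (hPpos k).ne'
  exact (hAt.mul hPtend).congr hak
end

section
/- Let X be a reflexive real Banach space, M : X → ℝ convex, proper and Gâteaux differentiable with Gâteaux derivative M′ : X → X* weak-to-weak continuous, and define the Bregman divergence B_M(x, z) := M(z) − M(x) − ⟨M′(x), z − x⟩. Let X̂ ⊆ X be nonempty, (x^k)_{k≥0} ⊂ X, and for each x̄ ∈ X̂ let (e_k(x̄))_{k≥0} be nonnegative reals. Assume: (i) every weak limit point of (x^k) belongs to X̂; (ii) B_M(x^{k+1}, x̄) ≤ B_M(x^k, x̄) + e_k(x̄) for all x̄ ∈ X̂ and k ≥ 0; (iii) Σ_{k=0}^{∞} e_k(x̄) < ∞ for all x̄ ∈ X̂. Then any two weak limit points x̂, x̄ of (x^k) lie in X̂ and satisfy ⟨M′(x̂) − M′(x̄), x̂ − x̄⟩ = 0. If (x^k)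 is bounded, a weak limit point exists. If, in addition, ⟨M′(x̂) − M′(x̄), x̂ − x̄⟩ = 0 for x̂, x̄ ∈ X̂ implies x̂ = x̄, then the whole sequence x^k converges weakly to some x̂ ∈ X̂. -/
open Filter

/-- Weak convergence of a sequence in a normed space: convergence tested against
every continuous linear functional. -/
def WeakConv {X : Type*} [NormedAddCommGroup X] [NormedSpace ℝ X]
    (u : ℕ → X) (x : X) : Prop :=
  ∀ f : StrongDual ℝ X, Tendsto (fun n => f (u n)) atTop (nhds (f x))

/-- A weak limit point of a sequence: the weak limit of some subsequence. -/
def WeakLimitPoint {X : Type*} [NormedAddCommGroup X] [NormedSpace ℝ X]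
    (u : ℕ → X) (x : X) : Prop :=
  ∃ φ : ℕ → ℕ, StrictMono φ ∧ WeakConv (u ∘ φ) x

/-!
Bregman distances from the iterates to a point of `Xhat` are nonnegative by convexity and
decrease up to a summable error, so they converge. As
`B(x_k, a) - B(x_k, b) = M a - M b - ⟨M'(x_k), a - b⟩`, the pairing `⟨M'(x_k), a - b⟩` converges
for `a, b ∈ Xhat`, and weak-to-weak continuity of `M'` makes `⟨M'(z), a - b⟩` independent of the
weak limit point `z`; taking `z = a` and `z = b` gives the first claim. Bounded sequences in a
reflexive space have weak limit points (pass to the separable closed span of the sequence, whose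
dual is then separable, and use sequential Banach–Alaoglu in its bidual). If weak limit points
are unique, every subsequence has a further subsequence converging weakly to the same point.
-/

open Set TopologicalSpace NormedSpace

section Duality

variable {𝕜 E : Type*} [RCLike 𝕜] [NormedAddCommGroup E] [NormedSpace 𝕜 E]

theorem Submodule.exists_strongDual_eq_zero_ne_zero (K : Submodule 𝕜 E)
    (hK : IsClosed (K : Set E)) {w : E} (hw : w ∉ K) :
    ∃ f : StrongDual 𝕜 E, (∀ y ∈ K, f y = 0) ∧ f w ≠ 0 := by
  have := hK -- the instance that makes `E ⧸ K` a normed space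
  obtain ⟨g, hg⟩ := SeparatingDual.exists_ne_zero (R := 𝕜) (x := K.mkQ w)
    (by simpa using hw)
  exact ⟨g.comp K.mkQL, fun y hy => by simp [(Submodule.Quotient.mk_eq_zero K).mpr hy], hg⟩

theorem separableSpace_of_separableSpace_strongDual [SeparableSpace (StrongDual 𝕜 E)] :
    SeparableSpace E := by
  obtain ⟨Λ, hΛ⟩ := exists_dense_seq (StrongDual 𝕜 E)
  have hnorming : ∀ n, ∃ w : E, ‖w‖ ≤ 1 ∧ ‖Λ n‖ / 2 ≤ ‖Λ n w‖ := by
    intro n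
    rcases eq_or_ne (Λ n) 0 with h | h
    · exact ⟨0, by simp [h]⟩
    · obtain ⟨w, hw1, hw2⟩ := (Λ n).exists_lt_apply_of_lt_opNorm
        (half_lt_self (norm_pos_iff.mpr h))
      exact ⟨w, hw1.le, hw2.le⟩
  -- A functional vanishing on every `w n` stays at distance `≥ ‖f‖ / 3` from every `Λ n`.
  choose w hw1 hw2 using hnorming
  set S := Submodule.span 𝕜 (range w)
  suffices hS : ∀ x, x ∈ S.topologicalClosure from isSeparable_univ_iff.mp <|
    ((countable_range w).isSeparable.span (R := 𝕜)).closure.mono fun x _ => hS x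
  intro x
  by_contra hx
  obtain ⟨f, hfS, hfx⟩ := S.topologicalClosure.exists_strongDual_eq_zero_ne_zero
    S.isClosed_topologicalClosure hx
  have hf : 0 < ‖f‖ := norm_pos_iff.mpr fun h => hfx (by simp [h])
  obtain ⟨n, hn⟩ := hΛ.exists_dist_lt f (by positivity : 0 < ‖f‖ / 3)
  rw [dist_eq_norm] at hn
  have hfw : f (w n) = 0 :=
    hfS _ (S.le_topologicalClosure (Submodule.subset_span (mem_range_self n)))
  have hΛw : ‖Λ n (w n)‖ ≤ ‖f - Λ n‖ :=
    calc ‖Λ n (w n)‖ = ‖(f - Λ n) (w n)‖ := by simp [hfw]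
      _ ≤ ‖f - Λ n‖ * ‖w n‖ := (f - Λ n).le_opNorm _
      _ ≤ ‖f - Λ n‖ := mul_le_of_le_one_right (norm_nonneg _) (hw1 n)
  have hΛn : ‖f‖ ≤ ‖f - Λ n‖ + ‖Λ n‖ := norm_le_norm_sub_add f (Λ n)
  linarith [hw2 n]

theorem Submodule.inclusionInDoubleDual_surjective_of_isClosed
    (hrefl : Function.Surjective (inclusionInDoubleDual 𝕜 E))
    (K : Submodule 𝕜 E) (hK : IsClosed (K : Set E)) :
    Function.Surjective (inclusionInDoubleDual 𝕜 K) := by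
  intro Λ
  let restrict : StrongDual 𝕜 E →L[𝕜] StrongDual 𝕜 K :=
    (ContinuousLinearMap.compL 𝕜 K E 𝕜).flip K.subtypeL
  obtain ⟨x, hx⟩ := hrefl (Λ.comp restrict)
  have hxΛ : ∀ f : StrongDual 𝕜 E, f x = Λ (f.comp K.subtypeL) := fun f =>
    congr($hx f)
  have hxK : x ∈ K := by
    by_contra hxK
    obtain ⟨f, hfK, hfx⟩ := K.exists_strongDual_eq_zero_ne_zero hK hxK
    have hf0 : f.comp K.subtypeL = 0 := by ext y; exact hfK y y.2
    exact hfx (by rw [hxΛ, hf0, map_zero])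
  refine ⟨⟨x, hxK⟩, ContinuousLinearMap.ext fun h => ?_⟩
  obtain ⟨g, hg, -⟩ := exists_extension_norm_eq K h
  have hgh : g.comp K.subtypeL = h := by ext y; exact hg y
  rw [dual_def, ← hg, ← hgh]
  exact hxΛ g

end Duality

section Reflexive

variable {X : Type*} [NormedAddCommGroup X] [NormedSpace ℝ X]
  (hrefl : Function.Surjective (inclusionInDoubleDual ℝ X))
include hrefl

theorem exists_weakLimitPoint_of_bounded_of_separableSpace [SeparableSpace X] {u : ℕ → X}
    {C : ℝ} (hC : ∀ k, ‖u k‖ ≤ C) : ∃ w, WeakLimitPoint u w := by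
  have : SeparableSpace (StrongDual ℝ (StrongDual ℝ X)) :=
    hrefl.denseRange.separableSpace (inclusionInDoubleDual ℝ X).continuous
  have : SeparableSpace (StrongDual ℝ X) :=
    separableSpace_of_separableSpace_strongDual (𝕜 := ℝ) (E := StrongDual ℝ X)
  -- sequential Banach–Alaoglu in the bidual
  obtain ⟨Λ, -, φ, hφ, hΛ⟩ := WeakDual.isSeqCompact_closedBall ℝ (StrongDual ℝ X) 0 C
    (x := fun k => StrongDual.toWeakDual (inclusionInDoubleDual ℝ X (u k))) fun k => by
      rw [mem_preimage, mem_closedBall_zero_iff]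
      exact (double_dual_bound ℝ X (u k)).trans (hC k)
  obtain ⟨w, hw⟩ := hrefl (WeakDual.toStrongDual Λ)
  refine ⟨w, φ, hφ, fun f => ?_⟩
  have hΛf : Λ f = f w := congr($hw f).symm
  rw [← hΛf]
  exact ((WeakDual.eval_continuous f).tendsto Λ).comp hΛ

theorem exists_weakLimitPoint_of_bounded {u : ℕ → X} {C : ℝ} (hC : ∀ k, ‖u k‖ ≤ C) :
    ∃ w, WeakLimitPoint u w := by
  let Y := (Submodule.span ℝ (range u)).topologicalClosure
  have huY : ∀ k, u k ∈ Y := fun k =>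
    Submodule.le_topologicalClosure _ (Submodule.subset_span (mem_range_self k))
  have : SeparableSpace Y :=
    ((countable_range u).isSeparable.span (R := ℝ)).closure.separableSpace
  obtain ⟨y, φ, hφ, hy⟩ := exists_weakLimitPoint_of_bounded_of_separableSpace
    (Y.inclusionInDoubleDual_surjective_of_isClosed hrefl
      (Submodule.isClosed_topologicalClosure _))
    (u := fun k => ⟨u k, huY k⟩) hC
  exact ⟨y, φ, hφ, fun f => hy (f.comp Y.subtypeL)⟩

theorem weakConv_of_forall_weakLimitPoint_eq {u : ℕ → X} {C : ℝ} (hC : ∀ k, ‖u k‖ ≤ C)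
    {w : X} (hw : ∀ w', WeakLimitPoint u w' → w' = w) : WeakConv u w := by
  intro f
  refine tendsto_of_subseq_tendsto fun ns hns => ?_
  obtain ⟨ψ, -, hψ⟩ := strictMono_subseq_of_tendsto_atTop hns
  obtain ⟨w', σ, hσ, hw'⟩ := exists_weakLimitPoint_of_bounded hrefl (u := u ∘ ns ∘ ψ)
    fun k => hC _
  obtain rfl := hw w' ⟨ns ∘ ψ ∘ σ, hψ.comp hσ, hw'⟩
  exact ⟨ψ ∘ σ, hw' f⟩

end Reflexive

theorem WeakLimitPoint.eq_of_tendsto {X : Type*} [NormedAddCommGroup X] [NormedSpace ℝ X]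
    {g : X → ℝ} (hg : ∀ u w, WeakConv u w → Tendsto (g ∘ u) atTop (nhds (g w)))
    {x : ℕ → X} {z : X} (hz : WeakLimitPoint x z) {l : ℝ}
    (hl : Tendsto (fun k => g (x k)) atTop (nhds l)) : g z = l := by
  obtain ⟨φ, hφ, hxz⟩ := hz
  exact tendsto_nhds_unique (hg _ _ hxz) (hl.comp hφ.tendsto_atTop)

theorem exists_tendsto_of_bddBelow_of_le_add_of_summable {a ε : ℕ → ℝ}
    (ha : BddBelow (range a)) (hle : ∀ k, a (k + 1) ≤ a k + ε k) (hε : Summable ε) :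
    ∃ l, Tendsto a atTop (nhds l) := by
  set b : ℕ → ℝ := fun k => a k - ∑ i ∈ Finset.range k, ε i
  have hb : Antitone b := antitone_nat_of_succ_le fun k => by
    simp only [b, Finset.sum_range_succ]
    linarith [hle k]
  have hpartial := hε.hasSum.tendsto_sum_nat
  obtain ⟨m, hm⟩ := ha
  obtain ⟨s, hs⟩ := hpartial.bddAbove_range
  have hbdd : BddBelow (range b) := ⟨m - s, by
    rintro _ ⟨k, rfl⟩
    linarith [hm (mem_range_self k), hs (mem_range_self k)]⟩
  exact ⟨_, ((tendsto_atTop_ciInf hb hbdd).add hpartial).congr fun k => by simp [b]⟩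

theorem ConvexOn.le_sub_of_hasDerivAt_lineMap {E : Type*} [AddCommGroup E] [Module ℝ E]
    {s : Set E} {M : E → ℝ} (hM : ConvexOn ℝ s M) {u v : E} (hu : u ∈ s) (hv : v ∈ s) {d : ℝ}
    (hd : HasDerivAt (fun t : ℝ => M (u + t • (v - u))) d 0) : d ≤ M v - M u := by
  have hline : (fun t : ℝ => M (u + t • (v - u))) = M ∘ AffineMap.lineMap u v := by
    ext t
    simp [AffineMap.lineMap_apply, add_comm]
  rw [hline] at hd
  have := (hM.comp_affineMap (AffineMap.lineMap u v)).le_slope_of_hasDerivAt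
    (x := 0) (y := 1) (by simpa using hu) (by simpa using hv) one_pos hd
  simpa [slope_def_field] using this

section Bregman

variable {X : Type*} [NormedAddCommGroup X] [NormedSpace ℝ X]

def bregmanDiv (M : X → ℝ) (M' : X → StrongDual ℝ X) (u v : X) : ℝ :=
  M v - M u - M' u (v - u)

variable {M : X → ℝ} {M' : X → StrongDual ℝ X}

theorem bregmanDiv_nonneg (hM : ConvexOn ℝ univ M)
    (hM' : ∀ u h : X, HasDerivAt (fun t : ℝ => M (u + t • h)) (M' u h) 0) (u v : X) :
    0 ≤ bregmanDiv M M' u v :=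
  sub_nonneg.mpr (hM.le_sub_of_hasDerivAt_lineMap (mem_univ u) (mem_univ v) (hM' u (v - u)))

theorem bregmanDiv_sub_bregmanDiv (u a b : X) :
    bregmanDiv M M' u a - bregmanDiv M M' u b = M a - M b - M' u (a - b) := by
  simp only [bregmanDiv, map_sub]
  ring

theorem sub_apply_sub_eq_zero_of_weakLimitPoint
    (hM' : ∀ (u : ℕ → X) (w : X), WeakConv u w →
      ∀ v : X, Tendsto (fun n => M' (u n) v) atTop (nhds (M' w v)))
    {x : ℕ → X} {a b : X} (ha : WeakLimitPoint x a) (hb : WeakLimitPoint x b)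
    (hBa : ∃ l, Tendsto (fun k => bregmanDiv M M' (x k) a) atTop (nhds l))
    (hBb : ∃ l, Tendsto (fun k => bregmanDiv M M' (x k) b) atTop (nhds l)) :
    (M' a - M' b) (a - b) = 0 := by
  obtain ⟨la, hla⟩ := hBa
  obtain ⟨lb, hlb⟩ := hBb
  have hpair : Tendsto (fun k => M' (x k) (a - b)) atTop (nhds (M a - M b - (la - lb))) :=
    (tendsto_const_nhds.sub (hla.sub hlb)).congr fun k => by
      rw [bregmanDiv_sub_bregmanDiv]
      ring
  have hcont : ∀ u w, WeakConv u w →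
      Tendsto ((fun y => M' y (a - b)) ∘ u) atTop (nhds (M' w (a - b))) :=
    fun u w huw => hM' u w huw (a - b)
  rw [sub_apply, ha.eq_of_tendsto hcont hpair, hb.eq_of_tendsto hcont hpair, sub_self]

end Bregman

theorem stmt19_general {X : Type*} [NormedAddCommGroup X] [NormedSpace ℝ X]
    -- reflexivity: the canonical embedding into the double dual is surjective
    (hrefl : Function.Surjective (NormedSpace.inclusionInDoubleDual ℝ X))
    (M : X → ℝ) (hMconv : ConvexOn ℝ Set.univ M)
    (M' : X → StrongDual ℝ X)
    (hGateaux : ∀ u h : X, HasDerivAt (fun t : ℝ => M (u + t • h)) (M' u h) 0)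
    (hM'wc : ∀ (u : ℕ → X) (w : X), WeakConv u w →
      ∀ v : X, Tendsto (fun n => M' (u n) v) atTop (nhds (M' w v)))
    (B : X → X → ℝ)
    (hB : ∀ u v : X, B u v = M v - M u - M' u (v - u))
    (Xhat : Set X)
    (x : ℕ → X) (e : X → ℕ → ℝ)
    (hlim : ∀ w : X, WeakLimitPoint x w → w ∈ Xhat)
    (hmono : ∀ xb ∈ Xhat, ∀ k : ℕ, B (x (k + 1)) xb ≤ B (x k) xb + e xb k)
    (hesum : ∀ xb ∈ Xhat, Summable (e xb)) :
    (∀ xh xb : X, WeakLimitPoint x xh → WeakLimitPoint x xb →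
      xh ∈ Xhat ∧ xb ∈ Xhat ∧ (M' xh - M' xb) (xh - xb) = 0)
    ∧ ((∃ C : ℝ, ∀ k : ℕ, ‖x k‖ ≤ C) → ∃ xh : X, WeakLimitPoint x xh)
    ∧ ((∃ C : ℝ, ∀ k : ℕ, ‖x k‖ ≤ C) →
        (∀ xh xb : X, xh ∈ Xhat → xb ∈ Xhat →
          (M' xh - M' xb) (xh - xb) = 0 → xh = xb) →
        ∃ xh ∈ Xhat, WeakConv x xh) := by
  obtain rfl : B = bregmanDiv M M' := funext₂ hB
  have hBconv : ∀ z ∈ Xhat, ∃ l, Tendsto (fun k => bregmanDiv M M' (x k) z) atTop (nhds l) :=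
    fun z hz => exists_tendsto_of_bddBelow_of_le_add_of_summable
      ⟨0, by rintro _ ⟨k, rfl⟩; exact bregmanDiv_nonneg hMconv hGateaux _ _⟩
      (hmono z hz) (hesum z hz)
  have hpair : ∀ xh xb, WeakLimitPoint x xh → WeakLimitPoint x xb →
      xh ∈ Xhat ∧ xb ∈ Xhat ∧ (M' xh - M' xb) (xh - xb) = 0 := fun xh xb hxh hxb =>
    ⟨hlim xh hxh, hlim xb hxb, sub_apply_sub_eq_zero_of_weakLimitPoint hM'wc hxh hxb
      (hBconv xh (hlim xh hxh)) (hBconv xb (hlim xb hxb))⟩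
  refine ⟨hpair, fun ⟨C, hC⟩ => exists_weakLimitPoint_of_bounded hrefl hC,
    fun ⟨C, hC⟩ huniq => ?_⟩
  obtain ⟨w, hw⟩ := exists_weakLimitPoint_of_bounded hrefl hC
  refine ⟨w, hlim w hw, weakConv_of_forall_weakLimitPoint_eq hrefl hC fun w' hw' => ?_⟩
  obtain ⟨hw'X, hwX, h0⟩ := hpair w' w hw' hw
  exact huniq w' w hw'X hwX h0

theorem stmt19 {X : Type*} [NormedAddCommGroup X] [NormedSpace ℝ X] [CompleteSpace X]
    -- reflexivity: the canonical embedding into the double dual is surjective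
    (hrefl : Function.Surjective (NormedSpace.inclusionInDoubleDual ℝ X))
    (M : X → ℝ) (hMconv : ConvexOn ℝ Set.univ M)
    (M' : X → StrongDual ℝ X)
    (hGateaux : ∀ u h : X, HasDerivAt (fun t : ℝ => M (u + t • h)) (M' u h) 0)
    (hM'wc : ∀ (u : ℕ → X) (w : X), WeakConv u w →
      ∀ v : X, Tendsto (fun n => M' (u n) v) atTop (nhds (M' w v)))
    (B : X → X → ℝ)
    (hB : ∀ u v : X, B u v = M v - M u - M' u (v - u))
    (Xhat : Set X) (hXhat : Xhat.Nonempty)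
    (x : ℕ → X) (e : X → ℕ → ℝ)
    (he0 : ∀ xb ∈ Xhat, ∀ k : ℕ, 0 ≤ e xb k)
    (hlim : ∀ w : X, WeakLimitPoint x w → w ∈ Xhat)
    (hmono : ∀ xb ∈ Xhat, ∀ k : ℕ, B (x (k + 1)) xb ≤ B (x k) xb + e xb k)
    (hesum : ∀ xb ∈ Xhat, Summable (e xb)) :
    (∀ xh xb : X, WeakLimitPoint x xh → WeakLimitPoint x xb →
      xh ∈ Xhat ∧ xb ∈ Xhat ∧ (M' xh - M' xb) (xh - xb) = 0)
    ∧ ((∃ C : ℝ, ∀ k : ℕ, ‖x k‖ ≤ C) → ∃ xh : X, WeakLimitPoint x xh)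
    ∧ ((∃ C : ℝ, ∀ k : ℕ, ‖x k‖ ≤ C) →
        (∀ xh xb : X, xh ∈ Xhat → xb ∈ Xhat →
          (M' xh - M' xb) (xh - xb) = 0 → xh = xb) →
        ∃ xh ∈ Xhat, WeakConv x xh) :=
  stmt19_general hrefl M hMconv M' hGateaux hM'wc B hB Xhat x e hlim hmono hesum
end
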